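/- arXiv:1407.2970 — 5 statements merged into one kernel-verified Lean document; each statement's English description precedes it below -/
import Mathlib

section
/- Let q be a prime power and r ≥ 2, and let #R_{r,n}(F_q) denote the number of reducible monic polynomials in F_q[x_1,…,x_r] of total degree n. Then #R_{r,0}(F_q) = 1, #R_{r,1}(F_q) = 0, #R_{r,2}(F_q) = (ρ_{r,2}(q)/2)·(1 − q^{−r−1}), and |#R_{r,3}(F_q) − ρ_{r,3}(q)| ≤ ρ_{r,3}(q)·q^{−r(r−1)/2}. -/
open MvPolynomial

/-- The key of a monomial in the degree-lexicographic order: first total degree, then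
lexicographic comparison of exponent vectors. -/
noncomputable def degLexKey {r : ℕ} (m : Fin r →₀ ℕ) : Lex (ℕ × Lex (Fin r →₀ ℕ)) :=
  toLex (m.sum fun _ e => e, toLex m)

/-- A multivariate polynomial is monic if the coefficient of its deg-lex leading monomial is 1. -/
def MvMonic {r : ℕ} {F : Type*} [CommSemiring F] (f : MvPolynomial (Fin r) F) : Prop :=
  ∃ m ∈ f.support, (∀ m' ∈ f.support, degLexKey m' ≤ degLexKey m) ∧ f.coeff m = 1

/-- The number of reducible monic `r`-variate polynomials of total degree `n` over `F`.
The constant polynomial `1` (degree 0) counts as reducible by convention. -/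
noncomputable def Rcount (F : Type) [Field F] (r n : ℕ) : ℕ :=
  Set.ncard {f : MvPolynomial (Fin r) F | f.totalDegree = n ∧ MvMonic f ∧ ¬ Irreducible f}

noncomputable def rho (q r n : ℕ) : ℚ :=
  (q : ℚ) ^ (Nat.choose (r + n - 1) r + r - 1) * (1 - ((q : ℚ)⁻¹) ^ r) / (1 - (q : ℚ)⁻¹) ^ 2


namespace Aux

variable {r : ℕ}

def mdeg (m : Fin r →₀ ℕ) : ℕ := m.sum fun _ e => e

lemma mdeg_add (a b : Fin r →₀ ℕ) : mdeg (a + b) = mdeg a + mdeg b :=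
  Finsupp.sum_add_index' (fun _ => rfl) (fun _ _ _ => rfl)

lemma key_def (m : Fin r →₀ ℕ) : degLexKey m = toLex (mdeg m, toLex m) := rfl

lemma key_inj : Function.Injective (degLexKey (r := r)) := by
  intro a b h
  have := congrArg ofLex h
  have h2 : (mdeg a, toLex a) = (mdeg b, toLex b) := this
  exact congrArg ofLex (Prod.ext_iff.1 h2).2

lemma key_lt_iff {a b : Fin r →₀ ℕ} :
    degLexKey a < degLexKey b ↔ mdeg a < mdeg b ∨ (mdeg a = mdeg b ∧ toLex a < toLex b) :=
  Prod.Lex.lt_iff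

lemma mdeg_mono {a b : Fin r →₀ ℕ} (h : degLexKey a ≤ degLexKey b) : mdeg a ≤ mdeg b := by
  rcases Prod.Lex.le_iff.1 h with h1 | h2
  · exact h1.le
  · exact h2.1.le

lemma key_add_lt {a b : Fin r →₀ ℕ} (c : Fin r →₀ ℕ)
    (h : degLexKey a < degLexKey b) : degLexKey (a + c) < degLexKey (b + c) := by
  rw [key_lt_iff] at h ⊢
  rcases h with h | ⟨h1, h2⟩
  · exact Or.inl (by rw [mdeg_add, mdeg_add]; omega)
  · refine Or.inr ⟨by rw [mdeg_add, mdeg_add, h1], ?_⟩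
    have : toLex (a + c) = toLex a + toLex c := rfl
    rw [this, show toLex (b + c) = toLex b + toLex c from rfl]
    exact add_lt_add_left h2 _

lemma key_add_le {a b : Fin r →₀ ℕ} (c : Fin r →₀ ℕ)
    (h : degLexKey a ≤ degLexKey b) : degLexKey (a + c) ≤ degLexKey (b + c) := by
  rcases h.lt_or_eq with h | h
  · exact (key_add_lt c h).le
  · rw [key_inj h]

lemma key_add_le_add {a b u v : Fin r →₀ ℕ} (h1 : degLexKey a ≤ degLexKey u)
    (h2 : degLexKey b ≤ degLexKey v) : degLexKey (a + b) ≤ degLexKey (u + v) := by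
  refine (key_add_le b h1).trans ?_
  rw [add_comm u b, add_comm u v]
  exact key_add_le u h2



variable {F : Type} [Field F]

open Classical in
/-- deg-lex leading monomial -/
noncomputable def lm (f : MvPolynomial (Fin r) F) : Fin r →₀ ℕ :=
  if h : f.support.Nonempty then (Finset.exists_max_image f.support degLexKey h).choose else 0

lemma lm_spec {f : MvPolynomial (Fin r) F} (hf : f ≠ 0) :
    lm f ∈ f.support ∧ ∀ m ∈ f.support, degLexKey m ≤ degLexKey (lm f) := by
  have h : f.support.Nonempty := by
    rwa [Finset.nonempty_iff_ne_empty, ne_eq, MvPolynomial.support_eq_empty]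
  rw [lm, dif_pos h]
  exact ⟨(Finset.exists_max_image f.support degLexKey h).choose_spec.1,
    (Finset.exists_max_image f.support degLexKey h).choose_spec.2⟩

lemma lm_mem {f : MvPolynomial (Fin r) F} (hf : f ≠ 0) : lm f ∈ f.support := (lm_spec hf).1

lemma lm_max {f : MvPolynomial (Fin r) F} (hf : f ≠ 0) :
    ∀ m ∈ f.support, degLexKey m ≤ degLexKey (lm f) := (lm_spec hf).2

lemma lm_eq {f : MvPolynomial (Fin r) F} {m : Fin r →₀ ℕ} (hm : m ∈ f.support)
    (hmax : ∀ m' ∈ f.support, degLexKey m' ≤ degLexKey m) : lm f = m := by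
  have hf : f ≠ 0 := fun h => by simp [h] at hm
  exact key_inj (le_antisymm (hmax _ (lm_mem hf)) (lm_max hf _ hm))

noncomputable def lc (f : MvPolynomial (Fin r) F) : F := f.coeff (lm f)

lemma lc_ne_zero {f : MvPolynomial (Fin r) F} (hf : f ≠ 0) : lc f ≠ 0 :=
  MvPolynomial.mem_support_iff.1 (lm_mem hf)

lemma lc_zero : lc (0 : MvPolynomial (Fin r) F) = 0 := by simp [lc]

lemma monic_iff {f : MvPolynomial (Fin r) F} : MvMonic f ↔ f ≠ 0 ∧ lc f = 1 := by
  constructor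
  · rintro ⟨m, hm, hmax, hc⟩
    have hf : f ≠ 0 := fun h => by simp [h] at hm
    exact ⟨hf, by rw [lc, lm_eq hm hmax]; exact hc⟩
  · rintro ⟨hf, hc⟩
    exact ⟨lm f, lm_mem hf, lm_max hf, hc⟩

lemma mdeg_lm {f : MvPolynomial (Fin r) F} (hf : f ≠ 0) : mdeg (lm f) = f.totalDegree := by
  apply le_antisymm
  · exact Finset.le_sup (f := fun m => m.sum fun _ e => e) (lm_mem hf)
  · exact Finset.sup_le fun m hm => mdeg_mono (lm_max hf m hm)

lemma coeff_mul_lm_add_lm {f g : MvPolynomial (Fin r) F} (hf : f ≠ 0) (hg : g ≠ 0) :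
    (f * g).coeff (lm f + lm g) = lc f * lc g := by
  classical
  rw [MvPolynomial.coeff_mul]
  rw [Finset.sum_eq_single_of_mem (lm f, lm g) (Finset.HasAntidiagonal.mem_antidiagonal.2 rfl)]
  · rfl
  · rintro ⟨u, v⟩ huv hne
    rw [Finset.HasAntidiagonal.mem_antidiagonal] at huv
    by_cases hu : u ∈ f.support
    · by_cases hv : v ∈ g.support
      · exfalso
        have h1 : degLexKey u ≤ degLexKey (lm f) := lm_max hf u hu
        have h2 : degLexKey v ≤ degLexKey (lm g) := lm_max hg v hv
        rcases h1.lt_or_eq with h1 | h1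
        · have hlt := key_add_lt v h1
          have h3 : degLexKey (lm f + v) ≤ degLexKey (lm f + lm g) := by
            rw [add_comm (lm f) v, add_comm (lm f) (lm g)]; exact key_add_le _ h2
          rw [huv] at hlt
          exact absurd (hlt.trans_le h3) (lt_irrefl _)
        · have hu' : u = lm f := key_inj h1
          have hv' : v = lm g := by
            have h4 := huv; rw [hu'] at h4; exact add_left_cancel h4
          exact absurd (by rw [hu', hv'] : (u,v) = (lm f, lm g)) hne
      · simp [MvPolynomial.notMem_support_iff.1 hv]
    · simp [MvPolynomial.notMem_support_iff.1 hu]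

lemma mul_ne_zero' {f g : MvPolynomial (Fin r) F} (hf : f ≠ 0) (hg : g ≠ 0) : f * g ≠ 0 :=
  mul_ne_zero hf hg

lemma lm_mul {f g : MvPolynomial (Fin r) F} (hf : f ≠ 0) (hg : g ≠ 0) :
    lm (f * g) = lm f + lm g := by
  apply lm_eq
  · rw [MvPolynomial.mem_support_iff, coeff_mul_lm_add_lm hf hg]
    exact mul_ne_zero (lc_ne_zero hf) (lc_ne_zero hg)
  · intro m' hm'
    classical
    have := MvPolynomial.support_mul f g hm'
    rw [Finset.mem_add] at this
    obtain ⟨u, hu, v, hv, rfl⟩ := this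
    exact key_add_le_add (lm_max hf u hu) (lm_max hg v hv)

lemma lc_mul {f g : MvPolynomial (Fin r) F} (hf : f ≠ 0) (hg : g ≠ 0) :
    lc (f * g) = lc f * lc g := by
  rw [lc, lm_mul hf hg, coeff_mul_lm_add_lm hf hg]

lemma totalDegree_mul_eq {f g : MvPolynomial (Fin r) F} (hf : f ≠ 0) (hg : g ≠ 0) :
    (f * g).totalDegree = f.totalDegree + g.totalDegree := by
  rw [← mdeg_lm (mul_ne_zero hf hg), lm_mul hf hg, mdeg_add, mdeg_lm hf, mdeg_lm hg]

lemma monic_mul {f g : MvPolynomial (Fin r) F} (hf : MvMonic f) (hg : MvMonic g) :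
    MvMonic (f * g) := by
  rw [monic_iff] at hf hg ⊢
  exact ⟨mul_ne_zero hf.1 hg.1, by rw [lc_mul hf.1 hg.1, hf.2, hg.2, one_mul]⟩

lemma support_smul_eq {c : F} (hc : c ≠ 0) (f : MvPolynomial (Fin r) F) :
    (c • f).support = f.support := Finsupp.support_smul_eq hc

lemma lm_smul {c : F} (hc : c ≠ 0) {f : MvPolynomial (Fin r) F} (hf : f ≠ 0) :
    lm (c • f) = lm f := by
  have h0 : c • f ≠ 0 := by
    intro h
    apply hf
    have := congrArg (fun p => c⁻¹ • p) h
    simpa [smul_smul, inv_mul_cancel₀ hc] using this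
  apply lm_eq
  · rw [support_smul_eq hc f]
    exact lm_mem hf
  · intro m' hm'
    exact lm_max hf m' (by rwa [support_smul_eq hc f] at hm')

lemma lc_smul {c : F} (hc : c ≠ 0) {f : MvPolynomial (Fin r) F} (hf : f ≠ 0) :
    lc (c • f) = c * lc f := by
  rw [lc, lm_smul hc hf, MvPolynomial.coeff_smul, smul_eq_mul, lc]

lemma totalDegree_smul_eq {c : F} (hc : c ≠ 0) (f : MvPolynomial (Fin r) F) :
    (c • f).totalDegree = f.totalDegree := by
  rw [MvPolynomial.totalDegree, MvPolynomial.totalDegree, support_smul_eq hc]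

lemma smul_ne_zero' {c : F} (hc : c ≠ 0) {f : MvPolynomial (Fin r) F} (hf : f ≠ 0) :
    c • f ≠ 0 := by
  intro h
  apply hf
  have := congrArg (fun p => c⁻¹ • p) h
  simpa [smul_smul, inv_mul_cancel₀ hc] using this

lemma eq_C_of_totalDegree_eq_zero {f : MvPolynomial (Fin r) F} (h : f.totalDegree = 0) :
    f = MvPolynomial.C (f.coeff 0) := by
  rw [MvPolynomial.totalDegree_eq_zero_iff] at h
  ext m
  by_cases hm : m = 0
  · subst hm; simp
  · rw [MvPolynomial.coeff_C, if_neg (Ne.symm hm)]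
    by_contra hc
    have hns : m ∈ f.support := MvPolynomial.mem_support_iff.2 hc
    exact hm (Finsupp.ext fun x => h m hns x)

lemma isUnit_iff {f : MvPolynomial (Fin r) F} :
    IsUnit f ↔ ∃ c : F, c ≠ 0 ∧ f = MvPolynomial.C c := by
  constructor
  · intro h
    obtain ⟨u, rfl⟩ := h
    have h1 : (u : MvPolynomial (Fin r) F) * ↑u⁻¹ = 1 := u.mul_inv
    have hu : (u : MvPolynomial (Fin r) F) ≠ 0 := by
      intro h; rw [h, zero_mul] at h1; exact zero_ne_one h1
    have hv : (↑u⁻¹ : MvPolynomial (Fin r) F) ≠ 0 := by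
      intro h; rw [h, mul_zero] at h1; exact zero_ne_one h1
    have hdeg := totalDegree_mul_eq hu hv
    rw [h1, MvPolynomial.totalDegree_one] at hdeg
    have hd0 : (u : MvPolynomial (Fin r) F).totalDegree = 0 := by omega
    refine ⟨(u : MvPolynomial (Fin r) F).coeff 0, ?_, eq_C_of_totalDegree_eq_zero hd0⟩
    intro h0
    apply hu
    rw [eq_C_of_totalDegree_eq_zero hd0, h0, map_zero]
  · rintro ⟨c, hc, rfl⟩
    exact (isUnit_iff_ne_zero.2 hc).map (MvPolynomial.C : F →+* MvPolynomial (Fin r) F)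

lemma lm_C {c : F} (hc : c ≠ 0) : lm (MvPolynomial.C (σ := Fin r) c) = 0 := by
  apply lm_eq
  · simp [MvPolynomial.mem_support_iff, hc]
  · intro m' hm'
    rw [MvPolynomial.mem_support_iff, MvPolynomial.coeff_C] at hm'
    have : m' = 0 := by by_contra h; rw [if_neg (Ne.symm h)] at hm'; exact hm' rfl
    rw [this]

lemma lc_C {c : F} (hc : c ≠ 0) : lc (MvPolynomial.C (σ := Fin r) c) = c := by
  rw [lc, lm_C hc, MvPolynomial.coeff_C, if_pos rfl]

lemma eq_of_associated_monic {a b : MvPolynomial (Fin r) F} (h : Associated a b)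
    (ha : MvMonic a) (hb : MvMonic b) : a = b := by
  obtain ⟨u, rfl⟩ := h
  rw [monic_iff] at ha hb
  obtain ⟨c, hc, hC⟩ := isUnit_iff.1 u.isUnit
  rw [hC] at hb ⊢
  have hCne : (MvPolynomial.C (σ := Fin r) c) ≠ 0 := fun h0 => hc (by
    simpa using congrArg (MvPolynomial.coeff 0) h0)
  rw [lc_mul ha.1 hCne, ha.2, one_mul, lc_C hc] at hb
  rw [hb.2, map_one, mul_one]

lemma totalDegree_pos_of_not_unit {f : MvPolynomial (Fin r) F} (hf : f ≠ 0)
    (hu : ¬ IsUnit f) : 1 ≤ f.totalDegree := by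
  by_contra h
  push_neg at h
  have h0 : f.totalDegree = 0 := by omega
  exact hu (isUnit_iff.2 ⟨f.coeff 0, by
    intro hc; apply hf; rw [eq_C_of_totalDegree_eq_zero h0, hc, map_zero], 
    eq_C_of_totalDegree_eq_zero h0⟩)

lemma not_unit_of_totalDegree_pos {f : MvPolynomial (Fin r) F} (h : 1 ≤ f.totalDegree) :
    ¬ IsUnit f := by
  intro hu
  obtain ⟨c, hc, rfl⟩ := isUnit_iff.1 hu
  rw [MvPolynomial.totalDegree_C] at h
  omega

lemma ne_zero_of_totalDegree_pos {f : MvPolynomial (Fin r) F} (h : 1 ≤ f.totalDegree) :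
    f ≠ 0 := by
  intro h0
  rw [h0, MvPolynomial.totalDegree_zero] at h
  omega

lemma irreducible_of_totalDegree_one {f : MvPolynomial (Fin r) F} (h : f.totalDegree = 1) :
    Irreducible f := by
  have hf : f ≠ 0 := ne_zero_of_totalDegree_pos (by omega)
  refine ⟨not_unit_of_totalDegree_pos (by omega), ?_⟩
  intro a b hab
  have ha : a ≠ 0 := fun h0 => hf (by rw [hab, h0, zero_mul])
  have hb : b ≠ 0 := fun h0 => hf (by rw [hab, h0, mul_zero])
  have hd := totalDegree_mul_eq ha hb
  rw [← hab, h] at hd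
  have : a.totalDegree = 0 ∨ b.totalDegree = 0 := by omega
  rcases this with h0 | h0
  · exact Or.inl (isUnit_iff.2 ⟨a.coeff 0, fun hc => ha (by
      rw [eq_C_of_totalDegree_eq_zero h0, hc, map_zero]), eq_C_of_totalDegree_eq_zero h0⟩)
  · exact Or.inr (isUnit_iff.2 ⟨b.coeff 0, fun hc => hb (by
      rw [eq_C_of_totalDegree_eq_zero h0, hc, map_zero]), eq_C_of_totalDegree_eq_zero h0⟩)

lemma isUnit_of_totalDegree_zero {f : MvPolynomial (Fin r) F} (hf : f ≠ 0)
    (h : f.totalDegree = 0) : IsUnit f :=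
  isUnit_iff.2 ⟨f.coeff 0, fun hc => hf (by
    rw [eq_C_of_totalDegree_eq_zero h, hc, map_zero]), eq_C_of_totalDegree_eq_zero h⟩

/-- a reducible monic polynomial of positive degree splits into two monic factors of
positive degree -/
lemma exists_monic_factorization {f : MvPolynomial (Fin r) F} {n : ℕ} (hn : 1 ≤ n)
    (hdeg : f.totalDegree = n) (hm : MvMonic f) (hirr : ¬ Irreducible f) :
    ∃ a b : MvPolynomial (Fin r) F, MvMonic a ∧ MvMonic b ∧ 1 ≤ a.totalDegree ∧
      1 ≤ b.totalDegree ∧ a.totalDegree + b.totalDegree = n ∧ f = a * b := by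
  have hf : f ≠ 0 := (monic_iff.1 hm).1
  have hnu : ¬ IsUnit f := not_unit_of_totalDegree_pos (by omega)
  have hex : ∃ a b : MvPolynomial (Fin r) F, f = a * b ∧ ¬ IsUnit a ∧ ¬ IsUnit b := by
    by_contra hcon
    push_neg at hcon
    exact hirr ⟨hnu, fun a b hab => by
      by_contra hcc
      push_neg at hcc
      exact hcc.2 (hcon a b hab hcc.1)⟩
  obtain ⟨a, b, hab, hau, hbu⟩ := hex
  have ha : a ≠ 0 := fun h0 => hf (by rw [hab, h0, zero_mul])
  have hb : b ≠ 0 := fun h0 => hf (by rw [hab, h0, mul_zero])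
  have hda : 1 ≤ a.totalDegree := totalDegree_pos_of_not_unit ha hau
  have hdb : 1 ≤ b.totalDegree := totalDegree_pos_of_not_unit hb hbu
  have hd := totalDegree_mul_eq ha hb
  rw [← hab, hdeg] at hd
  refine ⟨(lc a)⁻¹ • a, lc a • b, ?_, ?_, ?_, ?_, ?_, ?_⟩
  · exact monic_iff.2 ⟨smul_ne_zero' (inv_ne_zero (lc_ne_zero ha)) ha,
      by rw [lc_smul (inv_ne_zero (lc_ne_zero ha)) ha, inv_mul_cancel₀ (lc_ne_zero ha)]⟩
  · refine monic_iff.2 ⟨smul_ne_zero' (lc_ne_zero ha) hb, ?_⟩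
    have heq : f = ((lc a)⁻¹ • a) * (lc a • b) := by
      rw [smul_mul_smul_comm, inv_mul_cancel₀ (lc_ne_zero ha), one_smul, hab]
    have h1 : lc f = lc ((lc a)⁻¹ • a) * lc (lc a • b) := by
      rw [heq]; exact lc_mul (smul_ne_zero' (inv_ne_zero (lc_ne_zero ha)) ha)
        (smul_ne_zero' (lc_ne_zero ha) hb)
    rw [(monic_iff.1 hm).2, lc_smul (inv_ne_zero (lc_ne_zero ha)) ha,
      inv_mul_cancel₀ (lc_ne_zero ha), one_mul] at h1
    exact h1.symm
  · rwa [totalDegree_smul_eq (inv_ne_zero (lc_ne_zero ha))]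
  · rwa [totalDegree_smul_eq (lc_ne_zero ha)]
  · rw [totalDegree_smul_eq (inv_ne_zero (lc_ne_zero ha)), totalDegree_smul_eq (lc_ne_zero ha)]
    omega
  · rw [smul_mul_smul_comm, inv_mul_cancel₀ (lc_ne_zero ha), one_smul, hab]

lemma not_irreducible_of_monic_factors {a b : MvPolynomial (Fin r) F}
    (ha : 1 ≤ a.totalDegree) (hb : 1 ≤ b.totalDegree) : ¬ Irreducible (a * b) :=
  fun h => (h.2 rfl).elim (not_unit_of_totalDegree_pos ha) (not_unit_of_totalDegree_pos hb)

/-! ### Counting -/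

lemma single_le_mdeg (m : Fin r →₀ ℕ) (i : Fin r) : m i ≤ mdeg m := by
  by_cases hi : i ∈ m.support
  · exact Finset.single_le_sum (f := fun j => m j) (fun _ _ => Nat.zero_le _) hi
  · rw [Finsupp.notMem_support_iff.1 hi]; exact Nat.zero_le _

lemma finite_mdeg_le (n : ℕ) : Finite {m : Fin r →₀ ℕ // mdeg m ≤ n} := by
  apply Finite.of_injective (f := fun m (i : Fin r) =>
    (⟨m.1 i, Nat.lt_succ_of_le ((single_le_mdeg m.1 i).trans m.2)⟩ : Fin (n + 1)))
  intro a b h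
  apply Subtype.ext
  ext i
  exact congrArg Fin.val (congrFun h i)

lemma finite_tdeg_le [Finite F] (n : ℕ) : Finite {f : MvPolynomial (Fin r) F // f.totalDegree ≤ n} := by
  haveI := finite_mdeg_le (r := r) n
  apply Finite.of_injective (f := fun f (m : {m : Fin r →₀ ℕ // mdeg m ≤ n}) => f.1.coeff m.1)
  intro a b h
  apply Subtype.ext
  apply MvPolynomial.ext
  intro m
  by_cases hm : mdeg m ≤ n
  · exact congrFun h ⟨m, hm⟩
  · rw [MvPolynomial.coeff, MvPolynomial.coeff]
    rw [Finsupp.notMem_support_iff.1, Finsupp.notMem_support_iff.1]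
    · intro hs; exact hm (MvPolynomial.le_totalDegree hs |>.trans b.2)
    · intro hs; exact hm (MvPolynomial.le_totalDegree hs |>.trans a.2)

noncomputable def symEquiv (n : ℕ) : {m : Fin r →₀ ℕ // mdeg m = n} ≃ Sym (Fin r) n where
  toFun m := ⟨Finsupp.toMultiset m.1, by
    rw [Finsupp.card_toMultiset]; exact m.2⟩
  invFun s := ⟨Multiset.toFinsupp s.1, by
    have : Multiset.card (Finsupp.toMultiset (Multiset.toFinsupp s.1)) = mdeg (Multiset.toFinsupp s.1) := by
      rw [Finsupp.card_toMultiset]; rfl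
    rw [Multiset.toFinsupp_toMultiset] at this
    rw [← this, s.2]⟩
  left_inv m := Subtype.ext (Finsupp.toMultiset_toFinsupp m.1)
  right_inv s := Subtype.ext (Multiset.toFinsupp_toMultiset s.1)

lemma card_mdeg_eq (n : ℕ) : Nat.card {m : Fin r →₀ ℕ // mdeg m = n} = (r + n - 1).choose n := by
  rw [Nat.card_congr (symEquiv n), Nat.card_eq_fintype_card, Sym.card_sym_eq_multichoose,
    Nat.multichoose_eq, Fintype.card_fin]

lemma card_split {α : Type*} (P Q : α → Prop) [hfin : Finite {x : α // P x}] :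
    Nat.card {x : α // P x} = Nat.card {x : α // P x ∧ Q x} + Nat.card {x : α // P x ∧ ¬ Q x} := by
  classical
  haveI : Finite {x : α // P x ∧ Q x} := Finite.of_injective
    (fun y => (⟨y.1, y.2.1⟩ : {x : α // P x})) (fun a b h => by simpa [Subtype.ext_iff] using h)
  haveI : Finite {x : α // P x ∧ ¬ Q x} := Finite.of_injective
    (fun y => (⟨y.1, y.2.1⟩ : {x : α // P x})) (fun a b h => by simpa [Subtype.ext_iff] using h)
  have e : {x : α // P x} ≃ {x : α // P x ∧ Q x} ⊕ {x : α // P x ∧ ¬ Q x} := {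
    toFun := fun x => if h : Q x.1 then Sum.inl ⟨x.1, x.2, h⟩ else Sum.inr ⟨x.1, x.2, h⟩
    invFun := fun s => match s with
      | .inl y => ⟨y.1, y.2.1⟩
      | .inr y => ⟨y.1, y.2.1⟩
    left_inv := fun x => by by_cases h : Q x.1 <;> simp [h]
    right_inv := fun s => by
      rcases s with y | y
      · simp [y.2.2]
      · simp [y.2.2] }
  rw [Nat.card_congr e, Nat.card_sum]

lemma mdeg_zero_unique (m : Fin r →₀ ℕ) (h : mdeg m ≤ 0) : m = 0 := by
  ext i
  have := single_le_mdeg m i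
  simp only [Finsupp.coe_zero, Pi.zero_apply]
  omega

lemma card_mdeg_le (n : ℕ) :
    Nat.card {m : Fin r →₀ ℕ // mdeg m ≤ n} = (r + n).choose n := by
  induction n with
  | zero =>
    haveI : Unique {m : Fin r →₀ ℕ // mdeg m ≤ 0} := {
      default := ⟨0, by simp [mdeg]⟩
      uniq := fun m => Subtype.ext (mdeg_zero_unique m.1 m.2) }
    rw [show (r + 0).choose 0 = 1 from Nat.choose_zero_right _]
    exact Nat.card_unique
  | succ n ih =>
    haveI := finite_mdeg_le (r := r) (n + 1)
    have h := card_split (fun m : Fin r →₀ ℕ => mdeg m ≤ n + 1) (fun m => mdeg m = n + 1)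
    have e1 : Nat.card {m : Fin r →₀ ℕ // mdeg m ≤ n + 1 ∧ mdeg m = n + 1}
        = Nat.card {m : Fin r →₀ ℕ // mdeg m = n + 1} :=
      Nat.card_congr (Equiv.subtypeEquivRight (fun m => by constructor <;> (intro h; first | exact h.2 | exact ⟨h.le, h⟩)))
    have e2 : Nat.card {m : Fin r →₀ ℕ // mdeg m ≤ n + 1 ∧ ¬ mdeg m = n + 1}
        = Nat.card {m : Fin r →₀ ℕ // mdeg m ≤ n} :=
      Nat.card_congr (Equiv.subtypeEquivRight (fun m => by omega))
    rw [e1, e2, ih, card_mdeg_eq] at h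
    rw [h]
    have h2 : r + (n + 1) - 1 = r + n := by omega
    rw [h2, show r + (n + 1) = (r + n) + 1 from by omega, Nat.choose_succ_succ]
    exact Nat.add_comm _ _

section WithFintype
variable [Fintype F]

noncomputable def polyEquiv (n : ℕ) :
    {f : MvPolynomial (Fin r) F // f.totalDegree ≤ n} ≃ ({m : Fin r →₀ ℕ // mdeg m ≤ n} → F) := by
  classical
  haveI := finite_mdeg_le (r := r) n
  haveI : Fintype {m : Fin r →₀ ℕ // mdeg m ≤ n} := Fintype.ofFinite _
  exact {
    toFun := fun f m => f.1.coeff m.1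
    invFun := fun g => ⟨∑ m : {m : Fin r →₀ ℕ // mdeg m ≤ n}, MvPolynomial.monomial m.1 (g m), by
      refine (MvPolynomial.totalDegree_finset_sum _ _).trans (Finset.sup_le fun m _ => ?_)
      exact (MvPolynomial.totalDegree_monomial_le _ _).trans m.2⟩
    left_inv := fun f => by
      apply Subtype.ext
      apply MvPolynomial.ext
      intro m'
      rw [MvPolynomial.coeff_sum]
      by_cases hm' : mdeg m' ≤ n
      · rw [Finset.sum_eq_single_of_mem (⟨m', hm'⟩ : {m : Fin r →₀ ℕ // mdeg m ≤ n})
          (Finset.mem_univ _)]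
        · rw [MvPolynomial.coeff_monomial, if_pos rfl]
        · intro b _ hb
          rw [MvPolynomial.coeff_monomial, if_neg]
          intro hbm
          exact hb (Subtype.ext hbm)
      · have hz : f.1.coeff m' = 0 := by
          by_contra hc
          exact hm' ((MvPolynomial.le_totalDegree (MvPolynomial.mem_support_iff.2 hc)).trans f.2)
        rw [hz]
        exact Finset.sum_eq_zero (fun b _ => by
          rw [MvPolynomial.coeff_monomial, if_neg]
          intro hbm
          exact hm' (hbm ▸ b.2))
    right_inv := fun g => by
      funext m
      show MvPolynomial.coeff m.1 (∑ x : {m : Fin r →₀ ℕ // mdeg m ≤ n}, MvPolynomial.monomial x.1 (g x)) = g m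
      rw [MvPolynomial.coeff_sum, Finset.sum_eq_single_of_mem m (Finset.mem_univ _)]
      · rw [MvPolynomial.coeff_monomial, if_pos rfl]
      · intro b _ hb
        rw [MvPolynomial.coeff_monomial, if_neg]
        intro hbm
        exact hb (Subtype.ext hbm) }

lemma card_tdeg_le (n : ℕ) :
    Nat.card {f : MvPolynomial (Fin r) F // f.totalDegree ≤ n}
      = Fintype.card F ^ ((r + n).choose n) := by
  classical
  haveI := finite_mdeg_le (r := r) n
  haveI : Fintype {m : Fin r →₀ ℕ // mdeg m ≤ n} := Fintype.ofFinite _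
  rw [Nat.card_congr (polyEquiv n), Nat.card_eq_fintype_card, Fintype.card_fun,
    ← card_mdeg_le (r := r) n, Nat.card_eq_fintype_card]

lemma finite_tdeg_eq_monic (n : ℕ) (P : MvPolynomial (Fin r) F → Prop) :
    Finite {f : MvPolynomial (Fin r) F // f.totalDegree = n ∧ P f} := by
  haveI : Finite F := inferInstance
  haveI := finite_tdeg_le (F := F) (r := r) n
  exact Finite.of_injective (fun f => (⟨f.1, f.2.1.le⟩ : {f : MvPolynomial (Fin r) F // f.totalDegree ≤ n}))
    (fun a b h => by simpa [Subtype.ext_iff] using h)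

lemma finite_tdeg_eq (n : ℕ) :
    Finite {f : MvPolynomial (Fin r) F // f.totalDegree = n} := by
  haveI : Finite F := inferInstance
  haveI := finite_tdeg_le (F := F) (r := r) n
  exact Finite.of_injective (fun f => (⟨f.1, f.2.le⟩ : {f : MvPolynomial (Fin r) F // f.totalDegree ≤ n}))
    (fun a b h => by simpa [Subtype.ext_iff] using h)

lemma card_tdeg_eq_add (n : ℕ) (hn : 1 ≤ n) :
    Fintype.card F ^ ((r + (n-1)).choose (n-1)) + Nat.card {f : MvPolynomial (Fin r) F // f.totalDegree = n}
      = Fintype.card F ^ ((r + n).choose n) := by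
  haveI : Finite F := inferInstance
  haveI := finite_tdeg_le (F := F) (r := r) n
  have h := card_split (fun f : MvPolynomial (Fin r) F => f.totalDegree ≤ n)
    (fun f => f.totalDegree = n)
  have e1 : Nat.card {f : MvPolynomial (Fin r) F // f.totalDegree ≤ n ∧ f.totalDegree = n}
      = Nat.card {f : MvPolynomial (Fin r) F // f.totalDegree = n} :=
    Nat.card_congr (Equiv.subtypeEquivRight (fun f => by omega))
  have e2 : Nat.card {f : MvPolynomial (Fin r) F // f.totalDegree ≤ n ∧ ¬ f.totalDegree = n}
      = Nat.card {f : MvPolynomial (Fin r) F // f.totalDegree ≤ n - 1} :=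
    Nat.card_congr (Equiv.subtypeEquivRight (fun f => by omega))
  rw [e1, e2, card_tdeg_le, card_tdeg_le] at h
  omega

/-- factor out the unit group: counting polynomials of exact degree vs monic ones -/
noncomputable def monicEquiv (n : ℕ) (hn : 1 ≤ n) :
    {f : MvPolynomial (Fin r) F // f.totalDegree = n} ≃
      Fˣ × {f : MvPolynomial (Fin r) F // f.totalDegree = n ∧ MvMonic f} := by
  classical
  have hne : ∀ f : {f : MvPolynomial (Fin r) F // f.totalDegree = n}, f.1 ≠ 0 := by
    rintro ⟨f, hf⟩ rfl
    rw [MvPolynomial.totalDegree_zero] at hf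
    omega
  exact {
    toFun := fun f => (Units.mk0 (lc f.1) (lc_ne_zero (hne f)),
      ⟨(lc f.1)⁻¹ • f.1, by
        rw [totalDegree_smul_eq (inv_ne_zero (lc_ne_zero (hne f)))]; exact f.2,
        monic_iff.2 ⟨smul_ne_zero' (inv_ne_zero (lc_ne_zero (hne f))) (hne f), by
          rw [lc_smul (inv_ne_zero (lc_ne_zero (hne f))) (hne f),
            inv_mul_cancel₀ (lc_ne_zero (hne f))]⟩⟩)
    invFun := fun p => ⟨(p.1 : F) • p.2.1, by
      rw [totalDegree_smul_eq p.1.ne_zero]; exact p.2.2.1⟩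
    left_inv := fun f => by
      apply Subtype.ext
      simp only [Units.val_mk0]
      rw [smul_smul, mul_inv_cancel₀ (lc_ne_zero (hne f)), one_smul]
    right_inv := fun p => by
      have h2 : p.2.1 ≠ 0 := (monic_iff.1 p.2.2.2).1
      have hlc : lc ((p.1 : F) • p.2.1) = (p.1 : F) := by
        rw [lc_smul p.1.ne_zero h2, (monic_iff.1 p.2.2.2).2, mul_one]
      refine Prod.ext (Units.ext ?_) (Subtype.ext ?_)
      · simp only [Units.val_mk0]
        exact hlc
      · simp only
        rw [hlc, smul_smul, inv_mul_cancel₀ p.1.ne_zero, one_smul] }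

lemma card_monic (n : ℕ) (hn : 1 ≤ n) :
    Fintype.card F ^ ((r + (n-1)).choose (n-1)) +
      (Fintype.card F - 1) * Nat.card {f : MvPolynomial (Fin r) F // f.totalDegree = n ∧ MvMonic f}
      = Fintype.card F ^ ((r + n).choose n) := by
  classical
  have h := card_tdeg_eq_add (F := F) (r := r) n hn
  rw [Nat.card_congr (monicEquiv n hn), Nat.card_prod, Nat.card_eq_fintype_card,
    Fintype.card_units] at h
  exact h

end WithFintype

/-! ### small degree cases and factorization counting -/

lemma monic_one : MvMonic (1 : MvPolynomial (Fin r) F) := by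
  rw [monic_iff]
  refine ⟨one_ne_zero, ?_⟩
  have : (1 : MvPolynomial (Fin r) F) = MvPolynomial.C 1 := by simp
  rw [this, lc_C one_ne_zero]

lemma case0 : {f : MvPolynomial (Fin r) F | f.totalDegree = 0 ∧ MvMonic f ∧ ¬ Irreducible f}
    = {1} := by
  ext f
  simp only [Set.mem_setOf_eq, Set.mem_singleton_iff]
  constructor
  · rintro ⟨hdeg, hm, _⟩
    obtain ⟨hf, hlc⟩ := monic_iff.1 hm
    have hC := eq_C_of_totalDegree_eq_zero hdeg
    have hc0 : f.coeff 0 ≠ 0 := fun h => hf (by rw [hC, h, map_zero])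
    rw [hC, lc_C hc0] at hlc
    rw [hC, hlc, map_one]
  · rintro rfl
    exact ⟨MvPolynomial.totalDegree_one, monic_one, not_irreducible_one⟩

lemma case1 : {f : MvPolynomial (Fin r) F | f.totalDegree = 1 ∧ MvMonic f ∧ ¬ Irreducible f}
    = ∅ := by
  ext f
  simp only [Set.mem_setOf_eq, Set.mem_empty_iff_false, iff_false, not_and]
  intro hdeg _ hirr
  exact hirr (irreducible_of_totalDegree_one hdeg)

section Fact

abbrev Lsub (F : Type) [Field F] (r : ℕ) := {f : MvPolynomial (Fin r) F // f.totalDegree = 1 ∧ MvMonic f}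

noncomputable def prodL {k : ℕ} (s : Sym (Lsub F r) k) : MvPolynomial (Fin r) F :=
  (Multiset.map Subtype.val s.1).prod

lemma prodL_irr {k : ℕ} (s : Sym (Lsub F r) k) :
    ∀ x ∈ Multiset.map Subtype.val s.1, Irreducible x := by
  intro x hx
  obtain ⟨a, _, rfl⟩ := Multiset.mem_map.1 hx
  exact irreducible_of_totalDegree_one a.2.1

lemma prodL_monic {k : ℕ} (s : Sym (Lsub F r) k) :
    ∀ x ∈ Multiset.map Subtype.val s.1, MvMonic x := by
  intro x hx
  obtain ⟨a, _, rfl⟩ := Multiset.mem_map.1 hx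
  exact a.2.2

lemma prodL_inj {k : ℕ} : Function.Injective (prodL (F := F) (r := r) (k := k)) := by
  intro s t h
  have hrel := UniqueFactorizationMonoid.factors_unique (prodL_irr s) (prodL_irr t)
    (by rw [show (Multiset.map Subtype.val s.1).prod = prodL s from rfl,
      show (Multiset.map Subtype.val t.1).prod = prodL t from rfl, h]; exact Associated.refl _)
  have heq : Multiset.map Subtype.val s.1 = Multiset.map Subtype.val t.1 := by
    rw [← Multiset.rel_eq]
    refine hrel.mono ?_
    intro a ha b hb hab
    exact eq_of_associated_monic hab (prodL_monic s a ha) (prodL_monic t b hb)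
  exact Subtype.ext (Multiset.map_injective Subtype.val_injective heq)

lemma prodL_two (s : Sym (Lsub F r) 2) : ∃ a b : Lsub F r, prodL s = a.1 * b.1 := by
  obtain ⟨a, b, hab⟩ := Multiset.card_eq_two.1 s.2
  exact ⟨a, b, by rw [prodL, hab]; simp⟩

lemma prodL_three (s : Sym (Lsub F r) 3) :
    ∃ a b c : Lsub F r, prodL s = a.1 * (b.1 * c.1) := by
  obtain ⟨a, b, c, habc⟩ := Multiset.card_eq_three.1 s.2
  exact ⟨a, b, c, by rw [prodL, habc]; simp [mul_assoc]⟩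

lemma L_ne_zero (a : Lsub F r) : a.1 ≠ 0 := (monic_iff.1 a.2.2).1

lemma prodL_two_mem (s : Sym (Lsub F r) 2) :
    (prodL s).totalDegree = 2 ∧ MvMonic (prodL s) ∧ ¬ Irreducible (prodL s) := by
  obtain ⟨a, b, hab⟩ := prodL_two s
  rw [hab]
  refine ⟨?_, monic_mul a.2.2 b.2.2,
    not_irreducible_of_monic_factors (by rw [a.2.1]) (by rw [b.2.1])⟩
  rw [totalDegree_mul_eq (L_ne_zero a) (L_ne_zero b), a.2.1, b.2.1]

variable [Fintype F]

lemma surj2 (f : MvPolynomial (Fin r) F) (hdeg : f.totalDegree = 2) (hm : MvMonic f)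
    (hirr : ¬ Irreducible f) : ∃ s : Sym (Lsub F r) 2, prodL s = f := by
  obtain ⟨a, b, ha, hb, hda, hdb, hsum, hab⟩ :=
    exists_monic_factorization (by omega) hdeg hm hirr
  have hda1 : a.totalDegree = 1 := by omega
  have hdb1 : b.totalDegree = 1 := by omega
  refine ⟨⟨({⟨a, hda1, ha⟩, ⟨b, hdb1, hb⟩} : Multiset (Lsub F r)), by simp⟩, ?_⟩
  unfold prodL
  simp [hab]

lemma card_R2 :
    Nat.card {f : MvPolynomial (Fin r) F // f.totalDegree = 2 ∧ MvMonic f ∧ ¬ Irreducible f}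
      = (Nat.card (Lsub F r) + 2 - 1).choose 2 := by
  classical
  have hbij : Function.Bijective (fun s : Sym (Lsub F r) 2 =>
      (⟨prodL s, prodL_two_mem s⟩ :
        {f : MvPolynomial (Fin r) F // f.totalDegree = 2 ∧ MvMonic f ∧ ¬ Irreducible f})) := by
    constructor
    · intro s t h
      exact prodL_inj (congrArg Subtype.val h)
    · rintro ⟨f, hdeg, hm, hirr⟩
      obtain ⟨s, hs⟩ := surj2 f hdeg hm hirr
      exact ⟨s, Subtype.ext hs⟩
  haveI : Finite (Lsub F r) := finite_tdeg_eq_monic 1 MvMonic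
  haveI : Fintype (Lsub F r) := Fintype.ofFinite _
  rw [← Nat.card_congr (Equiv.ofBijective _ hbij), Nat.card_eq_fintype_card,
    Sym.card_sym_eq_multichoose, Nat.multichoose_eq, Nat.card_eq_fintype_card]

/-! ### degree 3 -/

abbrev Q2I (F : Type) [Field F] (r : ℕ) :=
  {f : MvPolynomial (Fin r) F // (f.totalDegree = 2 ∧ MvMonic f) ∧ Irreducible f}

lemma dvd_totalDegree_le {g p : MvPolynomial (Fin r) F} (h : g ∣ p) (hp : p ≠ 0) :
    g.totalDegree ≤ p.totalDegree := by
  obtain ⟨h', rfl⟩ := h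
  have hg : g ≠ 0 := fun h0 => hp (by rw [h0, zero_mul])
  have hh : h' ≠ 0 := fun h0 => hp (by rw [h0, mul_zero])
  rw [totalDegree_mul_eq hg hh]
  omega

lemma prime_of_L (l : Lsub F r) : Prime l.1 :=
  (UniqueFactorizationMonoid.irreducible_iff_prime).1 (irreducible_of_totalDegree_one l.2.1)

lemma prime_of_Q (g : Q2I F r) : Prime g.1 :=
  (UniqueFactorizationMonoid.irreducible_iff_prime).1 g.2.2

lemma not_dvd_L {g : MvPolynomial (Fin r) F} (hg : g.totalDegree = 2) (l : Lsub F r) :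
    ¬ g ∣ l.1 := fun h => by
  have := dvd_totalDegree_le h (L_ne_zero l)
  rw [hg, l.2.1] at this
  omega

noncomputable def phi1 (p : Lsub F r × Q2I F r) : MvPolynomial (Fin r) F := p.1.1 * p.2.1

lemma Q_ne_zero (g : Q2I F r) : g.1 ≠ 0 := (monic_iff.1 g.2.1.2).1

lemma phi1_inj : Function.Injective (phi1 (F := F) (r := r)) := by
  rintro ⟨l, g⟩ ⟨l', g'⟩ h
  simp only [phi1] at h
  have hdvd : l.1 ∣ l'.1 * g'.1 := ⟨g.1, h.symm⟩
  rcases (prime_of_L l).2.2 _ _ hdvd with hd | hd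
  · obtain ⟨u, hu⟩ := hd
    have hu0 : u ≠ 0 := fun h0 => L_ne_zero l' (by rw [hu, h0, mul_zero])
    have hdu : u.totalDegree = 0 := by
      have := totalDegree_mul_eq (L_ne_zero l) hu0
      rw [← hu, l.2.1, l'.2.1] at this
      omega
    have hassoc : Associated l.1 l'.1 := by
      obtain ⟨c, hc, hcu⟩ := isUnit_iff.1 (isUnit_of_totalDegree_zero hu0 hdu)
      exact ⟨(isUnit_of_totalDegree_zero hu0 hdu).unit, by rw [IsUnit.unit_spec, ← hu]⟩
    have hll : l.1 = l'.1 := eq_of_associated_monic hassoc l.2.2 l'.2.2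
    have hgg : g.1 = g'.1 := by
      apply mul_left_cancel₀ (L_ne_zero l)
      rw [h, hll]
    exact Prod.ext (Subtype.ext hll) (Subtype.ext hgg)
  · exfalso
    obtain ⟨u, hu⟩ := hd
    have hu0 : u ≠ 0 := fun h0 => Q_ne_zero g' (by rw [hu, h0, mul_zero])
    have hdu : u.totalDegree = 1 := by
      have := totalDegree_mul_eq (L_ne_zero l) hu0
      rw [← hu, l.2.1, g'.2.1.1] at this
      omega
    rcases g'.2.2.2 hu with hun | hun
    · exact not_unit_of_totalDegree_pos (by rw [l.2.1]) hun
    · exact not_unit_of_totalDegree_pos (by rw [hdu]) hun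

lemma phi1_mem (p : Lsub F r × Q2I F r) :
    (phi1 p).totalDegree = 3 ∧ MvMonic (phi1 p) ∧ ¬ Irreducible (phi1 p) := by
  refine ⟨?_, monic_mul p.1.2.2 p.2.2.1.2,
    not_irreducible_of_monic_factors (by rw [p.1.2.1]) (by rw [p.2.2.1.1]; omega)⟩
  rw [phi1, totalDegree_mul_eq (L_ne_zero p.1) (Q_ne_zero p.2), p.1.2.1, p.2.2.1.1]

lemma prodL_three_mem (s : Sym (Lsub F r) 3) :
    (prodL s).totalDegree = 3 ∧ MvMonic (prodL s) ∧ ¬ Irreducible (prodL s) := by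
  obtain ⟨a, b, c, habc⟩ := prodL_three s
  have hbc : (b.1 * c.1).totalDegree = 2 := by
    rw [totalDegree_mul_eq (L_ne_zero b) (L_ne_zero c), b.2.1, c.2.1]
  have hbc0 : b.1 * c.1 ≠ 0 := mul_ne_zero (L_ne_zero b) (L_ne_zero c)
  rw [habc]
  refine ⟨?_, monic_mul a.2.2 (monic_mul b.2.2 c.2.2),
    not_irreducible_of_monic_factors (by rw [a.2.1]) (by rw [hbc]; omega)⟩
  rw [totalDegree_mul_eq (L_ne_zero a) hbc0, a.2.1, hbc]

lemma disjoint_ranges :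
    Disjoint (Set.range (phi1 (F := F) (r := r))) (Set.range (prodL (F := F) (r := r) (k := 3))) := by
  rw [Set.disjoint_left]
  rintro f ⟨p, rfl⟩ ⟨s, hs⟩
  obtain ⟨a, b, c, habc⟩ := prodL_three s
  have hdvd : p.2.1 ∣ a.1 * (b.1 * c.1) := ⟨p.1.1, by rw [← habc, hs, phi1, mul_comm]⟩
  have hg2 : (p.2.1 : MvPolynomial (Fin r) F).totalDegree = 2 := p.2.2.1.1
  rcases (prime_of_Q p.2).2.2 _ _ hdvd with hd | hd
  · exact not_dvd_L hg2 a hd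
  · rcases (prime_of_Q p.2).2.2 _ _ hd with hd' | hd'
    · exact not_dvd_L hg2 b hd'
    · exact not_dvd_L hg2 c hd'

lemma cover3 : {f : MvPolynomial (Fin r) F | f.totalDegree = 3 ∧ MvMonic f ∧ ¬ Irreducible f}
    = Set.range (phi1 (F := F) (r := r)) ∪ Set.range (prodL (F := F) (r := r) (k := 3)) := by
  apply Set.eq_of_subset_of_subset
  · rintro f ⟨hdeg, hm, hirr⟩
    obtain ⟨a, b, ha, hb, hda, hdb, hsum, hab⟩ :=
      exists_monic_factorization (by omega) hdeg hm hirr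
    -- arrange (deg 1, deg 2)
    obtain ⟨l, g, hl1, hg2, hlm, hgm, hfg⟩ :
        ∃ l g : MvPolynomial (Fin r) F, l.totalDegree = 1 ∧ g.totalDegree = 2 ∧
          MvMonic l ∧ MvMonic g ∧ f = l * g := by
      rcases Nat.lt_or_ge a.totalDegree 2 with hlt | hge
      · exact ⟨a, b, by omega, by omega, ha, hb, hab⟩
      · exact ⟨b, a, by omega, by omega, hb, ha, by rw [hab, mul_comm]⟩
    by_cases hgi : Irreducible g
    · exact Or.inl ⟨(⟨l, hl1, hlm⟩, ⟨g, ⟨hg2, hgm⟩, hgi⟩), by rw [phi1, hfg]⟩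
    · obtain ⟨u, v, hu, hv, hdu, hdv, hsum2, hg⟩ :=
        exists_monic_factorization (by omega) hg2 hgm hgi
      refine Or.inr ⟨⟨({⟨l, hl1, hlm⟩, ⟨u, by omega, hu⟩, ⟨v, by omega, hv⟩} :
        Multiset (Lsub F r)), by simp⟩, ?_⟩
      unfold prodL
      simp [hfg, hg, mul_assoc]
  · rintro f (⟨p, rfl⟩ | ⟨s, rfl⟩)
    · exact phi1_mem p
    · exact prodL_three_mem s

lemma card_R3 :
    Nat.card {f : MvPolynomial (Fin r) F // f.totalDegree = 3 ∧ MvMonic f ∧ ¬ Irreducible f}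
      = Nat.card (Lsub F r) * Nat.card (Q2I F r)
        + (Nat.card (Lsub F r) + 3 - 1).choose 3 := by
  classical
  haveI hL : Finite (Lsub F r) := finite_tdeg_eq_monic 1 MvMonic
  haveI : Fintype (Lsub F r) := Fintype.ofFinite _
  haveI := finite_tdeg_eq_monic (F := F) (r := r) 2 MvMonic
  haveI hQ : Finite (Q2I F r) := Finite.of_injective
    (fun g : Q2I F r => (⟨g.1, g.2.1⟩ : {f : MvPolynomial (Fin r) F // f.totalDegree = 2 ∧ MvMonic f}))
    (fun a b h => by simpa [Subtype.ext_iff] using h)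
  have hset : Nat.card {f : MvPolynomial (Fin r) F // f.totalDegree = 3 ∧ MvMonic f ∧ ¬ Irreducible f}
      = Set.ncard {f : MvPolynomial (Fin r) F | f.totalDegree = 3 ∧ MvMonic f ∧ ¬ Irreducible f} :=
    Nat.card_coe_set_eq _
  rw [hset, cover3, Set.ncard_union_eq disjoint_ranges (Set.finite_range _) (Set.finite_range _),
    ← Nat.card_coe_set_eq, ← Nat.card_coe_set_eq,
    Nat.card_range_of_injective phi1_inj, Nat.card_range_of_injective prodL_inj,
    Nat.card_prod, Nat.card_eq_fintype_card (α := Sym (Lsub F r) 3),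
    Sym.card_sym_eq_multichoose, Nat.multichoose_eq, Nat.card_eq_fintype_card]

end Fact

end Aux

set_option maxHeartbeats 2000000 in
theorem stmt1 (q : ℕ) (F : Type) [Field F] [Fintype F] (hq : Fintype.card F = q)
    (r : ℕ) (hr : 2 ≤ r) :
    Rcount F r 0 = 1 ∧ Rcount F r 1 = 0 ∧
    (Rcount F r 2 : ℚ) = rho q r 2 / 2 * (1 - ((q : ℚ)⁻¹) ^ (r + 1)) ∧
    |(Rcount F r 3 : ℚ) - rho q r 3| ≤ rho q r 3 * ((q : ℚ)⁻¹) ^ (r * (r - 1) / 2) := by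
  classical
  have hq2 : 2 ≤ q := by rw [← hq]; exact Fintype.one_lt_card
  -- parts 1 and 2
  have h0 : Rcount F r 0 = 1 := by
    show Set.ncard _ = 1
    rw [Aux.case0, Set.ncard_singleton]
  have h1 : Rcount F r 1 = 0 := by
    show Set.ncard _ = 0
    rw [Aux.case1, Set.ncard_empty]
  -- natural number cardinalities
  obtain ⟨A1, hA1⟩ : ∃ a, Nat.card (Aux.Lsub F r) = a := ⟨_, rfl⟩
  obtain ⟨A2, hA2⟩ : ∃ a,
      Nat.card {f : MvPolynomial (Fin r) F // f.totalDegree = 2 ∧ MvMonic f} = a := ⟨_, rfl⟩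
  obtain ⟨I2, hI2⟩ : ∃ a, Nat.card (Aux.Q2I F r) = a := ⟨_, rfl⟩
  obtain ⟨B2, hB2⟩ : ∃ a, Nat.card {f : MvPolynomial (Fin r) F //
      f.totalDegree = 2 ∧ MvMonic f ∧ ¬ Irreducible f} = a := ⟨_, rfl⟩
  obtain ⟨B3, hB3⟩ : ∃ a, Nat.card {f : MvPolynomial (Fin r) F //
      f.totalDegree = 3 ∧ MvMonic f ∧ ¬ Irreducible f} = a := ⟨_, rfl⟩
  -- identification of Rcount with subtype cardinalities
  have hRc2 : Rcount F r 2 = B2 := by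
    rw [← hB2]
    show Set.ncard _ = _
    rw [← Nat.card_coe_set_eq]
    exact Nat.card_congr (Equiv.subtypeEquivRight fun f => Iff.rfl)
  have hRc3 : Rcount F r 3 = B3 := by
    rw [← hB3]
    show Set.ncard _ = _
    rw [← Nat.card_coe_set_eq]
    exact Nat.card_congr (Equiv.subtypeEquivRight fun f => Iff.rfl)
  -- counting identities
  have hm1 : q ^ 1 + (q - 1) * A1 = q ^ (r + 1) := by
    have h := Aux.card_monic (F := F) (r := r) 1 le_rfl
    rw [hq, hA1] at h
    simpa [Nat.choose_one_right] using h
  have hm2 : q ^ (r + 1) + (q - 1) * A2 = q ^ ((r + 2).choose 2) := by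
    have h := Aux.card_monic (F := F) (r := r) 2 (by omega)
    rw [hq, hA2] at h
    simpa [Nat.choose_one_right] using h
  have hsplit : A2 = I2 + B2 := by
    haveI := Aux.finite_tdeg_eq_monic (F := F) (r := r) 2 MvMonic
    have h := Aux.card_split (fun f : MvPolynomial (Fin r) F => f.totalDegree = 2 ∧ MvMonic f)
      (fun f => Irreducible f)
    rw [hA2] at h
    have e1 : Nat.card {f : MvPolynomial (Fin r) F //
        (f.totalDegree = 2 ∧ MvMonic f) ∧ Irreducible f} = I2 := hI2
    have e2 : Nat.card {f : MvPolynomial (Fin r) F //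
        (f.totalDegree = 2 ∧ MvMonic f) ∧ ¬ Irreducible f} = B2 := by
      rw [← hB2]
      exact Nat.card_congr (Equiv.subtypeEquivRight fun f => by tauto)
    rw [e1, e2] at h
    exact h
  have hB2c : B2 = (A1 + 1).choose 2 := by
    have h := Aux.card_R2 (F := F) (r := r)
    rw [hA1, hB2] at h
    simpa using h
  have hB3c : B3 = A1 * I2 + (A1 + 2).choose 3 := by
    have h := Aux.card_R3 (F := F) (r := r)
    rw [hA1, hI2, hB3] at h
    simpa using h
  have hA1pos : 1 ≤ A1 := by
    rcases Nat.eq_zero_or_pos A1 with h | h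
    · exfalso
      rw [h, Nat.mul_zero, Nat.add_zero] at hm1
      have : q ^ 1 < q ^ (r + 1) := Nat.pow_lt_pow_right (by omega) (by omega)
      omega
    · exact h
  -- choose identities
  have hch2 : (A1 + 1).choose 2 * 2 = (A1 + 1) * A1 := by
    have hdvd : 2 ∣ (A1 + 1) * A1 := by
      rw [mul_comm]
      exact (Nat.even_mul_succ_self A1).two_dvd
    rw [Nat.choose_two_right, Nat.add_sub_cancel, Nat.div_mul_cancel hdvd]
  have hch3 : (A1 + 2).choose 3 * 6 = (A1 + 2) * (A1 + 1) * A1 := by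
    obtain ⟨a, rfl⟩ : ∃ a, A1 = a + 1 := ⟨A1 - 1, by omega⟩
    have key := Nat.choose_mul_factorial_mul_factorial (show 3 ≤ a + 3 by omega)
    have h6 : (3).factorial = 6 := rfl
    have hsub : a + 3 - 3 = a := by omega
    rw [h6, hsub] at key
    have hfac : (a + 3).factorial = (a + 3) * ((a + 2) * ((a + 1) * a.factorial)) := by
      rw [show a + 3 = (a + 2) + 1 from rfl, Nat.factorial_succ,
        show a + 2 = (a + 1) + 1 from rfl, Nat.factorial_succ, Nat.factorial_succ]
    rw [hfac] at key
    have hpos : 0 < a.factorial := Nat.factorial_pos a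
    have : ((a + 1) + 2) = a + 3 := by omega
    rw [this]
    apply Nat.eq_of_mul_eq_mul_right hpos
    calc (a + 3).choose 3 * 6 * a.factorial = (a + 3).choose 3 * 6 * a.factorial := rfl
      _ = (a + 3) * ((a + 2) * ((a + 1) * a.factorial)) := key
      _ = (a + 3) * (a + 2) * (a + 1) * a.factorial := by ring
  -- exponent identities
  obtain ⟨s, rfl⟩ : ∃ s, r = s + 2 := ⟨r - 2, by omega⟩
  obtain ⟨k, hk⟩ := (Nat.even_mul_succ_self (s + 1))
  have hd : (s + 2) * ((s + 2) - 1) / 2 = k := by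
    have h1 : (s + 2) * ((s + 2) - 1) = k + k := by
      rw [show (s + 2) - 1 = s + 1 from rfl, mul_comm]
      exact hk
    omega
  have hE2 : ((s + 2) + 2).choose 2 = 2 * (s + 2) + 1 + k := by
    have hprod : (s + 4) * (s + 3) = ((s + 1) * ((s + 1) + 1)) + (4 * s + 10) := by ring
    rw [hk] at hprod
    rw [Nat.choose_two_right, show (s + 2) + 2 = s + 4 from rfl,
      show s + 4 - 1 = s + 3 from rfl]
    omega
  -- rational versions
  have hQ1 : (1:ℚ) < (q:ℚ) := by exact_mod_cast (by omega : 1 < q)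
  have hQ0 : (q:ℚ) ≠ 0 := by positivity
  have hQm1pos : (0:ℚ) < (q:ℚ) - 1 := by linarith
  have hQm1 : (q:ℚ) - 1 ≠ 0 := ne_of_gt hQm1pos
  have hX1 : (1:ℚ) ≤ (q:ℚ)^(s+2) := one_le_pow₀ hQ1.le
  have hXne : ((q:ℚ)^(s+2)) ≠ 0 := pow_ne_zero _ hQ0
  have hQiplt : (q:ℚ)⁻¹ < 1 := inv_lt_one_of_one_lt₀ hQ1
  have hQipos : (0:ℚ) < 1 - (q:ℚ)⁻¹ := by linarith
  have hQine : 1 - (q:ℚ)⁻¹ ≠ 0 := ne_of_gt hQipos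
  have ha1q : (1:ℚ) ≤ (A1:ℚ) := by exact_mod_cast hA1pos
  have hc1 : (A1:ℚ) * ((q:ℚ) - 1) = (q:ℚ)^(s+2) * (q:ℚ) - (q:ℚ) := by
    have h := congrArg (fun n : ℕ => (n : ℚ)) hm1
    push_cast [Nat.cast_sub (show 1 ≤ q by omega)] at h
    linear_combination h
  have hm2' : q ^ (s + 3) + (q - 1) * A2 = q ^ (2*(s+2)+1+k) := by
    rw [← hE2]
    exact hm2
  have hc2 : (A2:ℚ) * ((q:ℚ) - 1) = ((q:ℚ)^(s+2))^2 * (q:ℚ) * (q:ℚ)^k - (q:ℚ)^(s+2) * (q:ℚ) := by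
    have h := congrArg (fun n : ℕ => (n : ℚ)) hm2'
    push_cast [Nat.cast_sub (show 1 ≤ q by omega)] at h
    have hQ2k : (q:ℚ)^(2*(s+2)+1+k) = ((q:ℚ)^(s+2))^2 * (q:ℚ) * (q:ℚ)^k := by
      rw [pow_add, pow_add, mul_comm 2 (s+2), pow_mul, pow_one]
    rw [hQ2k] at h
    linear_combination h
  have hA1v : (A1:ℚ) = ((q:ℚ)^(s+2) * (q:ℚ) - (q:ℚ))/((q:ℚ)-1) := by
    rw [eq_div_iff hQm1]
    exact hc1
  have hA2v : (A2:ℚ) = (((q:ℚ)^(s+2))^2 * (q:ℚ) * (q:ℚ)^k - (q:ℚ)^(s+2) * (q:ℚ))/((q:ℚ)-1) := by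
    rw [eq_div_iff hQm1]
    exact hc2
  have hb2 : (B2:ℚ) * 2 = ((A1:ℚ) + 1) * A1 := by
    have h : B2 * 2 = (A1 + 1) * A1 := by rw [hB2c]; exact hch2
    exact_mod_cast h
  have hB2v : (B2:ℚ) = (((A1:ℚ) + 1) * A1)/2 := by linarith
  -- part 3
  have hrho2exp : ((s+2) + 2 - 1).choose (s+2) + (s+2) - 1 = 2*(s+2) := by
    rw [show (s+2)+2-1 = (s+2)+1 from rfl, Nat.choose_succ_self_right]
    omega
  have hrho2 : rho q (s+2) 2
      = (q:ℚ)^(2*(s+2)) * (1 - ((q:ℚ)^(s+2))⁻¹)/(1 - (q:ℚ)⁻¹)^2 := by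
    unfold rho
    rw [hrho2exp, inv_pow]
  have g3 : (Rcount F (s+2) 2 : ℚ) = rho q (s+2) 2 / 2 * (1 - ((q:ℚ)⁻¹) ^ ((s+2) + 1)) := by
    rw [hRc2, hrho2, hB2v, hA1v]
    rw [show ((q:ℚ)⁻¹)^((s+2)+1) = ((q:ℚ)^((s+2)+1))⁻¹ from inv_pow _ _]
    rw [show (q:ℚ)^((s+2)+1) = (q:ℚ)^(s+2) * (q:ℚ) from pow_succ _ _]
    rw [show (q:ℚ)^(2*(s+2)) = ((q:ℚ)^(s+2))^2 from by rw [mul_comm 2 (s+2), pow_mul]]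
    field_simp
    ring
  -- part 4
  have hrho3exp : ((s+2) + 3 - 1).choose (s+2) + (s+2) - 1 = 3*(s+2) + k := by
    rw [show (s+2)+3-1 = (s+2)+2 from rfl]
    have h2 : ((s+2)+2).choose (s+2) = ((s+2)+2).choose 2 := by
      rw [← Nat.choose_symm (show s+2 ≤ (s+2)+2 by omega)]
      congr 1
      omega
    rw [h2, hE2]
    omega
  have hrho3 : rho q (s+2) 3
      = ((q:ℚ)^(s+2))^3 * (q:ℚ)^k * (1 - ((q:ℚ)^(s+2))⁻¹)/(1 - (q:ℚ)⁻¹)^2 := by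
    unfold rho
    rw [hrho3exp, inv_pow]
    rw [show (q:ℚ)^(3*(s+2)+k) = ((q:ℚ)^(s+2))^3 * (q:ℚ)^k from by
      rw [pow_add, mul_comm 3 (s+2), pow_mul]]
  have hrhs : rho q (s+2) 3 * ((q:ℚ)⁻¹)^((s+2)*((s+2)-1)/2)
      = ((q:ℚ)^(s+2))^3 * (1 - ((q:ℚ)^(s+2))⁻¹)/(1 - (q:ℚ)⁻¹)^2 := by
    rw [hd, hrho3, inv_pow]
    have hTne : (q:ℚ)^k ≠ 0 := pow_ne_zero _ hQ0
    field_simp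
  have hi2 : (I2:ℚ) = (A2:ℚ) - B2 := by
    have h := congrArg (fun n : ℕ => (n : ℚ)) hsplit
    push_cast at h
    linarith
  have hb3 : (B3:ℚ) = (A1:ℚ) * I2 + (((A1 + 2).choose 3 : ℕ) : ℚ) := by
    exact_mod_cast congrArg (fun n : ℕ => (n : ℚ)) hB3c
  have hc3 : (((A1 + 2).choose 3 : ℕ) : ℚ) * 6 = ((A1:ℚ) + 2) * ((A1:ℚ) + 1) * A1 := by
    exact_mod_cast congrArg (fun n : ℕ => (n : ℚ)) hch3
  have hc3v : (((A1 + 2).choose 3 : ℕ) : ℚ) = (((A1:ℚ) + 2) * ((A1:ℚ) + 1) * A1)/6 := by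
    linarith
  have hkey : rho q (s+2) 3 - (B3:ℚ)
      = (q:ℚ)^2 * ((q:ℚ)^(s+2)) * ((q:ℚ)^(s+2) - 1)/((q:ℚ)-1)^2 + ((A1:ℚ)^3 - A1)/3 := by
    rw [hrho3, hb3, hi2, hB2v, hc3v, hA2v, hA1v]
    field_simp
    ring
  have hterm1 : (0:ℚ) ≤ (q:ℚ)^2 * ((q:ℚ)^(s+2)) * ((q:ℚ)^(s+2) - 1)/((q:ℚ)-1)^2 := by
    apply div_nonneg _ (by positivity)
    have : (0:ℚ) ≤ (q:ℚ)^(s+2) - 1 := by linarith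
    positivity
  have hterm2 : (0:ℚ) ≤ ((A1:ℚ)^3 - A1)/3 := by
    apply div_nonneg _ (by norm_num)
    nlinarith [ha1q]
  have hRHSv : ((q:ℚ)^(s+2))^3 * (1 - ((q:ℚ)^(s+2))⁻¹)/(1 - (q:ℚ)⁻¹)^2
      = (q:ℚ)^2 * (((q:ℚ)^(s+2))^3 - ((q:ℚ)^(s+2))^2)/((q:ℚ)-1)^2 := by
    field_simp
  have hfr : (q:ℚ)^2 * (((q:ℚ)^(s+2))^3 - ((q:ℚ)^(s+2))^2)/((q:ℚ)-1)^2
      - ((q:ℚ)^2 * ((q:ℚ)^(s+2)) * ((q:ℚ)^(s+2) - 1)/((q:ℚ)-1)^2 + ((A1:ℚ)^3 - A1)/3)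
      = (3*(q:ℚ)^2*((q:ℚ)^(s+2))*((q:ℚ)^(s+2) - 1)^2 - ((A1:ℚ)^3 - A1)*((q:ℚ)-1)^2)
        /(3*((q:ℚ)-1)^2) := by
    field_simp
    ring
  have h2a : (A1:ℚ) ≤ 2*((q:ℚ)^(s+2) - 1) := by
    have hQle : (q:ℚ) ≤ 2*((q:ℚ)-1) := by
      have : (2:ℚ) ≤ (q:ℚ) := by exact_mod_cast hq2
      linarith
    nlinarith [hc1, hX1, hQm1pos]
  have hnum : (0:ℚ) ≤ 3*(q:ℚ)^2*((q:ℚ)^(s+2))*((q:ℚ)^(s+2) - 1)^2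
      - ((A1:ℚ)^3 - A1)*((q:ℚ)-1)^2 := by
    have hid : ((A1:ℚ)^3 - A1)*((q:ℚ)-1)^2
        = (A1:ℚ)*((A1:ℚ)*((q:ℚ)-1))^2 - (A1:ℚ)*((q:ℚ)-1)^2 := by ring
    rw [hid, hc1]
    have h3X : (0:ℚ) ≤ 3*((q:ℚ)^(s+2)) - (A1:ℚ) := by linarith
    have hexp : 3*(q:ℚ)^2*((q:ℚ)^(s+2))*((q:ℚ)^(s+2) - 1)^2
        - ((A1:ℚ)*((q:ℚ)^(s+2) * (q:ℚ) - (q:ℚ))^2 - (A1:ℚ)*((q:ℚ)-1)^2)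
        = (q:ℚ)^2*((q:ℚ)^(s+2) - 1)^2*(3*((q:ℚ)^(s+2)) - (A1:ℚ)) + (A1:ℚ)*((q:ℚ)-1)^2 := by
      ring
    rw [hexp]
    have t1 : (0:ℚ) ≤ (q:ℚ)^2*((q:ℚ)^(s+2) - 1)^2*(3*((q:ℚ)^(s+2)) - (A1:ℚ)) :=
      mul_nonneg (mul_nonneg (sq_nonneg _) (sq_nonneg _)) h3X
    have t2 : (0:ℚ) ≤ (A1:ℚ)*((q:ℚ)-1)^2 :=
      mul_nonneg (by linarith) (sq_nonneg _)
    linarith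
  have hkey2 : rho q (s+2) 3 - (B3:ℚ)
      ≤ ((q:ℚ)^(s+2))^3 * (1 - ((q:ℚ)^(s+2))⁻¹)/(1 - (q:ℚ)⁻¹)^2 := by
    rw [hkey, hRHSv]
    have hfrac : (0:ℚ) ≤ (3*(q:ℚ)^2*((q:ℚ)^(s+2))*((q:ℚ)^(s+2) - 1)^2
        - ((A1:ℚ)^3 - A1)*((q:ℚ)-1)^2)/(3*((q:ℚ)-1)^2) :=
      div_nonneg hnum (by positivity)
    linarith [hfr]
  have g4 : |(Rcount F (s+2) 3 : ℚ) - rho q (s+2) 3|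
      ≤ rho q (s+2) 3 * ((q:ℚ)⁻¹) ^ ((s+2) * ((s+2) - 1) / 2) := by
    rw [hRc3, hrhs, abs_sub_comm, abs_of_nonneg (by linarith [hkey, hterm1, hterm2])]
    linarith [hkey2]
  exact ⟨h0, h1, g3, g4⟩
end

section
/- Let q be a prime power, r ≥ 2, s ≥ 2, and let #Q_{r,n,s}(F_q) denote the number of s-powerful monic polynomials in F_q[x_1,…,x_r] of total degree n. Then #Q_{r,n,s}(F_q) = 0 for 0 ≤ n < s, and #Q_{r,n,s}(F_q) = η_{r,n,s}(q) for s ≤ n < 2s. -/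
open MvPolynomial Pointwise

/-- The number of `s`-powerful monic `r`-variate polynomials of total degree `n` over `F`:
those divisible by the `s`-th power of some nonconstant polynomial. -/
noncomputable def Qcount (F : Type) [Field F] (r n s : ℕ) : ℕ :=
  Set.ncard {f : MvPolynomial (Fin r) F | f.totalDegree = n ∧ MvMonic f ∧
    ∃ g : MvPolynomial (Fin r) F, 0 < g.totalDegree ∧ g ^ s ∣ f}

noncomputable def eta (q r n s : ℕ) : ℚ :=
  (q : ℚ) ^ (Nat.choose (r + n - s) r + r - 1) * (1 - ((q : ℚ)⁻¹) ^ r) *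
    (1 - ((q : ℚ)⁻¹) ^ (Nat.choose (r + n - s - 1) (r - 1))) / (1 - (q : ℚ)⁻¹) ^ 2

namespace DLK
variable {r : ℕ}

abbrev deg (m : Fin r →₀ ℕ) : ℕ := m.sum fun _ e => e

lemma deg_add (a c : Fin r →₀ ℕ) : deg (a + c) = deg a + deg c :=
  Finsupp.sum_add_index' (fun _ => rfl) (fun _ _ _ => rfl)

lemma key_le_iff {a b : Fin r →₀ ℕ} : degLexKey a ≤ degLexKey b ↔
    deg a < deg b ∨ (deg a = deg b ∧ toLex a ≤ toLex b) := by
  rw [degLexKey, degLexKey, Prod.Lex.le_iff]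
  exact Iff.rfl

lemma key_lt_iff {a b : Fin r →₀ ℕ} : degLexKey a < degLexKey b ↔
    deg a < deg b ∨ (deg a = deg b ∧ toLex a < toLex b) := by
  rw [degLexKey, degLexKey, Prod.Lex.lt_iff]
  exact Iff.rfl

lemma key_inj : Function.Injective (degLexKey (r := r)) := by
  intro a b h
  have := congrArg (fun x => (ofLex x).2) h
  simpa [degLexKey] using this

lemma key_add_le {a b : Fin r →₀ ℕ} (c : Fin r →₀ ℕ) (h : degLexKey a ≤ degLexKey b) :
    degLexKey (a + c) ≤ degLexKey (b + c) := by
  rw [key_le_iff] at h ⊢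
  rcases h with h | ⟨h1, h2⟩
  · left; simp [deg_add]; omega
  · right
    constructor
    · simp [deg_add, h1]
    · exact add_le_add_left h2 (toLex c)

lemma key_add_lt {a b : Fin r →₀ ℕ} (c : Fin r →₀ ℕ) (h : degLexKey a < degLexKey b) :
    degLexKey (a + c) < degLexKey (b + c) := by
  rw [key_lt_iff] at h ⊢
  rcases h with h | ⟨h1, h2⟩
  · left; simp [deg_add]; omega
  · right
    constructor
    · simp [deg_add, h1]
    · exact add_lt_add_left h2 (toLex c)

lemma deg_le_of_key_le {a b : Fin r →₀ ℕ} (h : degLexKey a ≤ degLexKey b) : deg a ≤ deg b := by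
  rw [key_le_iff] at h; omega

variable {F : Type*} [Field F]

open Classical in
/-- The deg-lex leading monomial. -/
noncomputable def lm (f : MvPolynomial (Fin r) F) : Fin r →₀ ℕ :=
  if h : f = 0 then 0 else
    Classical.choose (f.support.exists_max_image degLexKey (by simpa using h))

lemma lm_spec {f : MvPolynomial (Fin r) F} (hf : f ≠ 0) :
    lm f ∈ f.support ∧ ∀ m ∈ f.support, degLexKey m ≤ degLexKey (lm f) := by
  rw [lm, dif_neg hf]
  have h := Classical.choose_spec (f.support.exists_max_image degLexKey (by simpa using hf))
  exact ⟨h.1, h.2⟩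

lemma lm_mem {f : MvPolynomial (Fin r) F} (hf : f ≠ 0) : lm f ∈ f.support := (lm_spec hf).1

lemma lm_max {f : MvPolynomial (Fin r) F} (hf : f ≠ 0) {m : Fin r →₀ ℕ} (hm : m ∈ f.support) :
    degLexKey m ≤ degLexKey (lm f) := (lm_spec hf).2 m hm

lemma lm_coeff_ne_zero {f : MvPolynomial (Fin r) F} (hf : f ≠ 0) : f.coeff (lm f) ≠ 0 :=
  MvPolynomial.mem_support_iff.mp (lm_mem hf)

lemma lm_unique {f : MvPolynomial (Fin r) F} {m : Fin r →₀ ℕ} (hm : m ∈ f.support)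
    (hmax : ∀ m' ∈ f.support, degLexKey m' ≤ degLexKey m) : lm f = m := by
  have hf : f ≠ 0 := fun h => by simp [h] at hm
  exact key_inj (le_antisymm (hmax _ (lm_mem hf)) (lm_max hf hm))

lemma mvMonic_iff {f : MvPolynomial (Fin r) F} :
    MvMonic f ↔ f ≠ 0 ∧ f.coeff (lm f) = 1 := by
  constructor
  · rintro ⟨m, hm, hmax, hc⟩
    have hf : f ≠ 0 := fun h => by simp [h] at hm
    exact ⟨hf, by rwa [lm_unique hm hmax]⟩
  · rintro ⟨hf, hc⟩
    exact ⟨lm f, lm_mem hf, fun m' hm' => lm_max hf hm', hc⟩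

lemma mvMonic_ne_zero {f : MvPolynomial (Fin r) F} (h : MvMonic f) : f ≠ 0 :=
  (mvMonic_iff.mp h).1

lemma deg_lm {f : MvPolynomial (Fin r) F} (hf : f ≠ 0) : deg (lm f) = f.totalDegree := by
  apply le_antisymm (MvPolynomial.le_totalDegree (lm_mem hf))
  exact Finset.sup_le fun m hm => deg_le_of_key_le (lm_max hf hm)

lemma lm_one : lm (1 : MvPolynomial (Fin r) F) = 0 := by
  apply lm_unique
  · rw [MvPolynomial.mem_support_iff]
    simp
  · intro m hm
    rw [MvPolynomial.mem_support_iff, MvPolynomial.coeff_one] at hm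
    have : m = 0 := by by_contra h; simp [Ne.symm h] at hm
    rw [this]

lemma coeff_mul_lm_add_lm (f g : MvPolynomial (Fin r) F) (hf : f ≠ 0) (hg : g ≠ 0) :
    (f * g).coeff (lm f + lm g) = f.coeff (lm f) * g.coeff (lm g) := by
  rw [MvPolynomial.coeff_mul]
  rw [Finset.sum_eq_single (lm f, lm g)]
  · rintro ⟨u, v⟩ huv hne
    rw [Finset.HasAntidiagonal.mem_antidiagonal] at huv
    replace huv : u + v = lm f + lm g := huv
    by_contra hc
    replace hc : f.coeff u * g.coeff v ≠ 0 := hc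
    have hu : u ∈ f.support := MvPolynomial.mem_support_iff.mpr (left_ne_zero_of_mul hc)
    have hv : v ∈ g.support := MvPolynomial.mem_support_iff.mpr (right_ne_zero_of_mul hc)
    have h1 : degLexKey u ≤ degLexKey (lm f) := lm_max hf hu
    have h2 : degLexKey v ≤ degLexKey (lm g) := lm_max hg hv
    rcases ne_or_eq u (lm f) with hune | hueq
    · have hlt : degLexKey u < degLexKey (lm f) := lt_of_le_of_ne h1 (fun h => hune (key_inj h))
      have h3 : degLexKey (u + v) < degLexKey (lm f + v) := key_add_lt v hlt
      have h4 : degLexKey (v + lm f) ≤ degLexKey (lm g + lm f) := key_add_le (lm f) h2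
      rw [add_comm v (lm f), add_comm (lm g) (lm f)] at h4
      rw [huv] at h3
      exact lt_irrefl _ (h3.trans_le h4)
    · subst hueq
      have hvne : v ≠ lm g := fun h => hne (by rw [h])
      have hlt : degLexKey v < degLexKey (lm g) := lt_of_le_of_ne h2 (fun h => hvne (key_inj h))
      exact hvne (add_left_cancel huv)
  · intro h
    exfalso
    exact h (Finset.HasAntidiagonal.mem_antidiagonal.mpr rfl)

lemma key_le_mul {f g : MvPolynomial (Fin r) F} (hf : f ≠ 0) (hg : g ≠ 0)
    {m : Fin r →₀ ℕ} (hm : m ∈ (f * g).support) :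
    degLexKey m ≤ degLexKey (lm f + lm g) := by
  have := MvPolynomial.support_mul f g hm
  rw [Finset.mem_add] at this
  obtain ⟨u, hu, v, hv, rfl⟩ := this
  have h1 : degLexKey (u + v) ≤ degLexKey (lm f + v) := key_add_le v (lm_max hf hu)
  have h2 : degLexKey (v + lm f) ≤ degLexKey (lm g + lm f) := key_add_le (lm f) (lm_max hg hv)
  rw [add_comm v (lm f), add_comm (lm g) (lm f)] at h2
  exact h1.trans h2

lemma mul_ne_zero' {f g : MvPolynomial (Fin r) F} (hf : f ≠ 0) (hg : g ≠ 0) : f * g ≠ 0 :=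
  mul_ne_zero hf hg

lemma lm_mul {f g : MvPolynomial (Fin r) F} (hf : f ≠ 0) (hg : g ≠ 0) :
    lm (f * g) = lm f + lm g := by
  apply lm_unique
  · rw [MvPolynomial.mem_support_iff, coeff_mul_lm_add_lm f g hf hg]
    exact mul_ne_zero (lm_coeff_ne_zero hf) (lm_coeff_ne_zero hg)
  · exact fun m hm => key_le_mul hf hg hm

lemma lc_mul {f g : MvPolynomial (Fin r) F} (hf : f ≠ 0) (hg : g ≠ 0) :
    (f * g).coeff (lm (f * g)) = f.coeff (lm f) * g.coeff (lm g) := by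
  rw [lm_mul hf hg, coeff_mul_lm_add_lm f g hf hg]

lemma totalDegree_mul_eq {f g : MvPolynomial (Fin r) F} (hf : f ≠ 0) (hg : g ≠ 0) :
    (f * g).totalDegree = f.totalDegree + g.totalDegree := by
  rw [← deg_lm (mul_ne_zero hf hg), lm_mul hf hg, deg_add, deg_lm hf, deg_lm hg]

lemma lc_pow {g : MvPolynomial (Fin r) F} (hg : g ≠ 0) (s : ℕ) :
    (g ^ s).coeff (lm (g ^ s)) = (g.coeff (lm g)) ^ s := by
  induction s with
  | zero => rw [pow_zero, pow_zero, lm_one]; simp [MvPolynomial.coeff_one]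
  | succ k ih =>
    rw [pow_succ, lc_mul (pow_ne_zero k hg) hg, ih, pow_succ]

lemma totalDegree_pow_eq {g : MvPolynomial (Fin r) F} (hg : g ≠ 0) (s : ℕ) :
    (g ^ s).totalDegree = s * g.totalDegree := by
  induction s with
  | zero => simp
  | succ k ih =>
    rw [pow_succ, totalDegree_mul_eq (pow_ne_zero k hg) hg, ih]
    ring

lemma lm_smul {c : F} (hc : c ≠ 0) (f : MvPolynomial (Fin r) F) (hf : f ≠ 0) :
    lm (c • f) = lm f := by
  have hs : (c • f).support = f.support := Finsupp.support_smul_eq hc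
  apply lm_unique
  · rw [hs]; exact lm_mem hf
  · rw [hs]; exact fun m' hm' => lm_max hf hm' 

-- ## Counting monomials

lemma apply_le_deg (m : Fin r →₀ ℕ) (i : Fin r) : m i ≤ deg m := by
  by_cases h : i ∈ m.support
  · exact Finset.single_le_sum (fun _ _ => Nat.zero_le _) h
  · simp [Finsupp.notMem_support_iff.mp h]

lemma finite_deg_le (d : ℕ) : Finite {m : Fin r →₀ ℕ // deg m ≤ d} := by
  apply Finite.of_injective (fun m => (fun i => (⟨m.1 i, Nat.lt_succ_of_le
    ((apply_le_deg m.1 i).trans m.2)⟩ : Fin (d+1)) : Fin r → Fin (d+1)))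
  intro a b h
  ext i
  have := congrFun h i
  simpa using congrArg Fin.val this

lemma finite_deg_eq (d : ℕ) : Finite {m : Fin r →₀ ℕ // deg m = d} := by
  have := finite_deg_le (r := r) d
  exact Finite.of_injective (fun m => (⟨m.1, le_of_eq m.2⟩ : {m : Fin r →₀ ℕ // deg m ≤ d}))
    (fun a b h => Subtype.ext (by simpa using congrArg Subtype.val h))

lemma finite_deg_lt (d : ℕ) : Finite {m : Fin r →₀ ℕ // deg m < d} := by
  have := finite_deg_le (r := r) d
  exact Finite.of_injective (fun m => (⟨m.1, le_of_lt m.2⟩ : {m : Fin r →₀ ℕ // deg m ≤ d}))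
    (fun a b h => Subtype.ext (by simpa using congrArg Subtype.val h))

lemma card_deg_eq (hr : 1 ≤ r) (d : ℕ) :
    Nat.card {m : Fin r →₀ ℕ // deg m = d} = (r + d - 1).choose (r - 1) := by
  classical
  have e : Sym (Fin r) d ≃ {m : Fin r →₀ ℕ // deg m = d} :=
    (Sym.equivNatSum (Fin r) d).trans (Equiv.subtypeEquivRight (fun _ => Iff.rfl))
  rw [← Nat.card_congr e, Nat.card_eq_fintype_card, Sym.card_sym_eq_multichoose,
    Nat.multichoose_eq, Fintype.card_fin]
  have h1 : d ≤ r + d - 1 := by omega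
  have := Nat.choose_symm h1
  rw [← this]
  congr 1
  omega

lemma pascal (hr : 1 ≤ r) (d : ℕ) :
    (r + d).choose r = (r + d - 1).choose r + (r + d - 1).choose (r - 1) := by
  obtain ⟨r', rfl⟩ : ∃ r', r = r' + 1 := ⟨r - 1, by omega⟩
  have h1 : r' + 1 + d = (r' + d) + 1 := by omega
  rw [h1]
  simp only [Nat.add_sub_cancel, Nat.choose_succ_succ]
  exact Nat.add_comm _ _

lemma card_deg_lt (hr : 1 ≤ r) (d : ℕ) :
    Nat.card {m : Fin r →₀ ℕ // deg m < d} = (r + d - 1).choose r := by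
  classical
  induction d with
  | zero =>
    have : IsEmpty {m : Fin r →₀ ℕ // deg m < 0} := ⟨fun m => Nat.not_lt_zero _ m.2⟩
    rw [Nat.card_of_isEmpty]
    exact (Nat.choose_eq_zero_of_lt (by omega)).symm
  | succ k ih =>
    have e1 : {m : Fin r →₀ ℕ // deg m < k + 1} ≃
        {m : Fin r →₀ ℕ // deg m < k ∨ deg m = k} :=
      Equiv.subtypeEquivRight (fun m => by omega)
    have hdisj : Disjoint (fun m : Fin r →₀ ℕ => deg m < k) (fun m => deg m = k) := by
      rw [Pi.disjoint_iff]
      intro m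
      rw [Prop.disjoint_iff]
      omega
    have e2 := subtypeOrEquiv (fun m : Fin r →₀ ℕ => deg m < k) (fun m => deg m = k) hdisj
    have := finite_deg_lt (r := r) k
    have := finite_deg_eq (r := r) k
    rw [Nat.card_congr (e1.trans e2), Nat.card_sum, ih, card_deg_eq hr]
    have h3 : r + (k+1) - 1 = r + k := by omega
    rw [h3, pascal hr k]

end DLK

-- ## Counting polynomials
namespace DLK
variable {r : ℕ} {F : Type*} [Field F]

lemma totalDegree_le_of_support (f : MvPolynomial (Fin r) F) (d : ℕ)
    (h : ∀ m ∈ f.support, deg m ≤ d) : f.totalDegree ≤ d :=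
  Finset.sup_le h

lemma totalDegree_smul_eq {c : F} (hc : c ≠ 0) (f : MvPolynomial (Fin r) F) :
    (c • f).totalDegree = f.totalDegree := by
  unfold MvPolynomial.totalDegree
  exact congrArg (fun s : Finset (Fin r →₀ ℕ) => s.sup fun s => s.sum fun _ e => e)
    (Finsupp.support_smul_eq hc)

variable [Fintype F]

lemma card_support_subset (T : Set (Fin r →₀ ℕ)) [Finite T] :
    Nat.card {f : MvPolynomial (Fin r) F // ↑f.support ⊆ T} =
      (Fintype.card F) ^ Nat.card T := by
  calc Nat.card {f : MvPolynomial (Fin r) F // ↑f.support ⊆ T}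
      = Nat.card (T → F) :=
        Nat.card_congr (((Equiv.subtypeEquiv (p := fun f : MvPolynomial (Fin r) F => ↑f.support ⊆ T) (q := fun f : (Fin r →₀ ℕ) →₀ F => ↑f.support ⊆ T) AddMonoidAlgebra.coeffEquiv (fun _ => Iff.rfl)).trans (Finsupp.restrictSupportEquiv T F)).trans Finsupp.equivFunOnFinite)
    _ = (Fintype.card F) ^ Nat.card T := by rw [Nat.card_fun, Nat.card_eq_fintype_card]

lemma finite_support_subset (T : Set (Fin r →₀ ℕ)) [Finite T] :
    Finite {f : MvPolynomial (Fin r) F // ↑f.support ⊆ T} :=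
  Finite.of_equiv _ (((Equiv.subtypeEquiv (p := fun f : MvPolynomial (Fin r) F => ↑f.support ⊆ T) (q := fun f : (Fin r →₀ ℕ) →₀ F => ↑f.support ⊆ T) AddMonoidAlgebra.coeffEquiv (fun _ => Iff.rfl)).trans (Finsupp.restrictSupportEquiv T F)).trans Finsupp.equivFunOnFinite).symm

lemma card_nonzero (hr : 1 ≤ r) (d : ℕ) :
    Nat.card {f : MvPolynomial (Fin r) F // f ≠ 0 ∧ f.totalDegree = d}
      + (Fintype.card F) ^ ((r + d - 1).choose r) = (Fintype.card F) ^ ((r + d).choose r) := by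
  classical
  set T : Set (Fin r →₀ ℕ) := {m | deg m ≤ d} with hT
  set Tlt : Set (Fin r →₀ ℕ) := {m | deg m < d} with hTlt
  haveI : Finite T := finite_deg_le d
  haveI : Finite Tlt := finite_deg_lt d
  haveI hfb : Finite {f : MvPolynomial (Fin r) F // ↑f.support ⊆ T} := finite_support_subset T
  have key : ∀ f : MvPolynomial (Fin r) F,
      ↑f.support ⊆ T ↔ (f ≠ 0 ∧ f.totalDegree = d) ∨ ↑f.support ⊆ Tlt := by
    intro f
    constructor
    · intro hsub
      by_cases hex : ∃ m ∈ f.support, deg m = d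
      · obtain ⟨m, hm, hmd⟩ := hex
        left
        refine ⟨fun h0 => by simp [h0] at hm, le_antisymm
          (totalDegree_le_of_support f d (fun m' hm' => hsub hm')) ?_⟩
        rw [← hmd]
        exact MvPolynomial.le_totalDegree hm
      · right
        push_neg at hex
        intro m hm
        have h1 : deg m ≤ d := hsub hm
        have h2 : deg m ≠ d := hex m hm
        exact lt_of_le_of_ne h1 h2
    · rintro (⟨h0, hd⟩ | hsub)
      · intro m hm
        have : deg m ≤ f.totalDegree := MvPolynomial.le_totalDegree hm
        rw [hd] at this
        exact this
      · intro m hm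
        have h2 : deg m < d := hsub hm
        exact le_of_lt h2
  have hdisj : Disjoint (fun f : MvPolynomial (Fin r) F => f ≠ 0 ∧ f.totalDegree = d)
      (fun f => ↑f.support ⊆ Tlt) := by
    rw [Pi.disjoint_iff]
    intro f
    rw [Prop.disjoint_iff]
    rintro ⟨⟨h0, hd⟩, hsub⟩
    have h1 : lm f ∈ f.support := lm_mem h0
    have h2 : deg (lm f) < d := hsub h1
    rw [deg_lm h0, hd] at h2
    exact lt_irrefl _ h2
  have e1 : {f : MvPolynomial (Fin r) F // ↑f.support ⊆ T} ≃
      {f : MvPolynomial (Fin r) F // (f ≠ 0 ∧ f.totalDegree = d) ∨ ↑f.support ⊆ Tlt} :=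
    Equiv.subtypeEquivRight key
  have e2 := subtypeOrEquiv (fun f : MvPolynomial (Fin r) F => f ≠ 0 ∧ f.totalDegree = d)
    (fun f => ↑f.support ⊆ Tlt) hdisj
  haveI : Finite {f : MvPolynomial (Fin r) F // f ≠ 0 ∧ f.totalDegree = d} :=
    Finite.of_injective (fun f => (⟨f.1, ((key f.1).mpr (Or.inl f.2)).trans'
      (by exact fun _ h => h)⟩ : {f : MvPolynomial (Fin r) F // ↑f.support ⊆ T}))
      (fun a b h => Subtype.ext (by simpa using congrArg Subtype.val h))
  haveI : Finite {f : MvPolynomial (Fin r) F // ↑f.support ⊆ Tlt} := finite_support_subset Tlt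
  have hcount := card_support_subset (F := F) T
  rw [Nat.card_congr (e1.trans e2), Nat.card_sum] at hcount
  have hcT : Nat.card T = (r + d).choose r := by
    have e3 : T ≃ {m : Fin r →₀ ℕ // deg m < d + 1} :=
      Equiv.subtypeEquivRight (fun m => by simp [hT, Nat.lt_succ_iff])
    rw [Nat.card_congr e3, card_deg_lt hr (d + 1)]
    exact congrArg (Nat.choose · r) (by omega)
  have hcTlt : Nat.card Tlt = (r + d - 1).choose r := by
    have e3 : Tlt ≃ {m : Fin r →₀ ℕ // deg m < d} := Equiv.subtypeEquivRight (fun m => Iff.rfl)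
    rw [Nat.card_congr e3, card_deg_lt hr d]
  rw [card_support_subset (F := F) Tlt, hcT, hcTlt] at hcount
  exact hcount

end DLK

-- ## Monic counting
namespace DLK
variable {r : ℕ} {F : Type*} [Field F]

lemma smul_monic {f : MvPolynomial (Fin r) F} (hf : f ≠ 0) :
    MvMonic ((f.coeff (lm f))⁻¹ • f) := by
  have ha : f.coeff (lm f) ≠ 0 := lm_coeff_ne_zero hf
  have hne : (f.coeff (lm f))⁻¹ • f ≠ 0 := smul_ne_zero (inv_ne_zero ha) hf
  rw [mvMonic_iff]
  refine ⟨hne, ?_⟩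
  rw [lm_smul (inv_ne_zero ha) f hf, MvPolynomial.coeff_smul, smul_eq_mul, inv_mul_cancel₀ ha]

lemma monic_units_equiv [Fintype F] (d : ℕ) :
    Nat.card {f : MvPolynomial (Fin r) F // f ≠ 0 ∧ f.totalDegree = d} =
      (Fintype.card F - 1) *
        Nat.card {f : MvPolynomial (Fin r) F // f.totalDegree = d ∧ MvMonic f} := by
  have hbij : Function.Bijective (fun p : Fˣ ×
      {f : MvPolynomial (Fin r) F // f.totalDegree = d ∧ MvMonic f} =>
      (⟨(p.1 : F) • p.2.1, by
        refine ⟨smul_ne_zero (Units.ne_zero p.1) (mvMonic_ne_zero p.2.2.2), ?_⟩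
        rw [totalDegree_smul_eq (Units.ne_zero p.1), p.2.2.1]⟩ :
      {f : MvPolynomial (Fin r) F // f ≠ 0 ∧ f.totalDegree = d})) := by
    constructor
    · rintro ⟨c, f, hfd, hfm⟩ ⟨c', f', hfd', hfm'⟩ h
      have h0 : (c : F) • f = (c' : F) • f' := congrArg Subtype.val h
      have hf0 : f ≠ 0 := mvMonic_ne_zero hfm
      have hf0' : f' ≠ 0 := mvMonic_ne_zero hfm'
      have hlm : lm ((c : F) • f) = lm f := lm_smul (Units.ne_zero c) f hf0
      have hlm' : lm ((c' : F) • f') = lm f' := lm_smul (Units.ne_zero c') f' hf0'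
      have hcoef : ((c : F) • f).coeff (lm ((c : F) • f)) = (c : F) := by
        rw [hlm, MvPolynomial.coeff_smul, (mvMonic_iff.mp hfm).2, smul_eq_mul, mul_one]
      have hcoef' : ((c' : F) • f').coeff (lm ((c' : F) • f')) = (c' : F) := by
        rw [hlm', MvPolynomial.coeff_smul, (mvMonic_iff.mp hfm').2, smul_eq_mul, mul_one]
      have hcc : (c : F) = (c' : F) := by rw [← hcoef, ← hcoef']; rw [h0]
      have hcu : c = c' := Units.ext hcc
      subst hcu
      have hff : f = f' := smul_right_injective _ (Units.ne_zero c) h0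
      simp [hff]
    · rintro ⟨f, hf0, hfd⟩
      have ha : f.coeff (lm f) ≠ 0 := lm_coeff_ne_zero hf0
      refine ⟨⟨Units.mk0 _ ha, ⟨(f.coeff (lm f))⁻¹ • f, ?_, smul_monic hf0⟩⟩, ?_⟩
      · rw [totalDegree_smul_eq (inv_ne_zero ha), hfd]
      · apply Subtype.ext
        simp only [Units.val_mk0]
        rw [smul_smul, mul_inv_cancel₀ ha, one_smul]
  rw [Nat.card_eq_of_bijective _ hbij |>.symm, Nat.card_prod, Nat.card_units,
    Nat.card_eq_fintype_card]

end DLK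

-- ## Structure of s-powerful polynomials of low degree
namespace DLK
variable {r : ℕ} {F : Type*} [Field F]

lemma eq_C_of_totalDegree_eq_zero {f : MvPolynomial (Fin r) F} (h : f.totalDegree = 0) :
    f = MvPolynomial.C (f.coeff 0) := by
  rw [MvPolynomial.totalDegree_eq_zero_iff] at h
  apply MvPolynomial.ext
  intro m
  rw [MvPolynomial.coeff_C]
  by_cases hm : m = 0
  · subst hm; simp
  · rw [if_neg (fun hh => hm hh.symm)]
    by_contra hc
    have hms : m ∈ f.support := MvPolynomial.mem_support_iff.mpr hc
    exact hm (Finsupp.ext (fun i => h m hms i))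

lemma isUnit_iff_totalDegree {f : MvPolynomial (Fin r) F} (hf : f ≠ 0) :
    IsUnit f ↔ f.totalDegree = 0 := by
  constructor
  · rintro ⟨u, rfl⟩
    have h1 : (u : MvPolynomial (Fin r) F) * ((u⁻¹ : (MvPolynomial (Fin r) F)ˣ) :
      MvPolynomial (Fin r) F) = 1 := u.mul_inv
    have h2 : ((u⁻¹ : (MvPolynomial (Fin r) F)ˣ) : MvPolynomial (Fin r) F) ≠ 0 := by
      intro h0
      rw [h0, mul_zero] at h1
      exact one_ne_zero h1.symm
    have h3 := totalDegree_mul_eq hf h2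
    rw [h1, MvPolynomial.totalDegree_one] at h3
    omega
  · intro h
    rw [eq_C_of_totalDegree_eq_zero h]
    have hc : f.coeff 0 ≠ 0 := fun h0 => hf (by rw [eq_C_of_totalDegree_eq_zero h, h0, map_zero])
    exact (isUnit_iff_ne_zero.mpr hc).map (MvPolynomial.C : F →+* MvPolynomial (Fin r) F)

end DLK

namespace DLK
variable {r : ℕ} {F : Type*} [Field F]

lemma totalDegree_le_of_dvd {a b : MvPolynomial (Fin r) F} (h : a ∣ b) (hb : b ≠ 0) :
    a.totalDegree ≤ b.totalDegree := by
  obtain ⟨c, rfl⟩ := h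
  have ha : a ≠ 0 := fun h0 => hb (by rw [h0, zero_mul])
  have hc : c ≠ 0 := fun h0 => hb (by rw [h0, mul_zero])
  rw [totalDegree_mul_eq ha hc]
  omega

lemma irreducible_of_deg_one {g : MvPolynomial (Fin r) F} (hg : g.totalDegree = 1) :
    Irreducible g := by
  have hg0 : g ≠ 0 := fun h0 => by simp [h0] at hg
  constructor
  · intro hu
    rw [isUnit_iff_totalDegree hg0] at hu
    omega
  · intro a b hab
    have ha : a ≠ 0 := fun h0 => hg0 (by rw [hab, h0, zero_mul])
    have hb : b ≠ 0 := fun h0 => hg0 (by rw [hab, h0, mul_zero])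
    have hd : a.totalDegree + b.totalDegree = 1 := by
      rw [← totalDegree_mul_eq ha hb, ← hab, hg]
    rcases Nat.eq_zero_or_pos a.totalDegree with h0 | h0
    · left; exact (isUnit_iff_totalDegree ha).mpr h0
    · right
      exact (isUnit_iff_totalDegree hb).mpr (by omega)

lemma prime_of_deg_one {g : MvPolynomial (Fin r) F} (hg : g.totalDegree = 1) : Prime g :=
  (UniqueFactorizationMonoid.irreducible_iff_prime).mp (irreducible_of_deg_one hg)

/-- two monic polynomials of the same degree dividing each other are equal -/
lemma monic_dvd_eq {g g' : MvPolynomial (Fin r) F} (hgm : MvMonic g) (hgm' : MvMonic g')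
    (hdeg : g.totalDegree = g'.totalDegree) (h : g ∣ g') : g = g' := by
  obtain ⟨c, rfl⟩ := h
  have hg0 : g ≠ 0 := mvMonic_ne_zero hgm
  have hg0' : g * c ≠ 0 := mvMonic_ne_zero hgm'
  have hc0 : c ≠ 0 := fun h0 => hg0' (by rw [h0, mul_zero])
  have hdc : c.totalDegree = 0 := by
    have := totalDegree_mul_eq hg0 hc0
    omega
  have hcC : c = MvPolynomial.C (c.coeff 0) := eq_C_of_totalDegree_eq_zero hdc
  have hsm : g * c = (c.coeff 0) • g := by
    rw [mul_comm]
    nth_rewrite 1 [hcC]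
    rw [MvPolynomial.C_mul']
  have hlc : (g * c).coeff (lm (g * c)) = (c.coeff 0) * g.coeff (lm g) := by
    rw [hsm, lm_smul (fun h0 => hc0 (by rw [hcC, h0, map_zero])) g hg0,
      MvPolynomial.coeff_smul, smul_eq_mul]
  rw [(mvMonic_iff.mp hgm').2, (mvMonic_iff.mp hgm).2, mul_one] at hlc
  rw [hsm, ← hlc, one_smul]

/-- The structural bijection, for s ≤ n < 2s. -/
lemma qset_equiv (n s : ℕ) (hs : 1 ≤ s) (hns : s ≤ n) (hn2 : n < 2 * s) :
    Function.Bijective (fun p :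
        {g : MvPolynomial (Fin r) F // g.totalDegree = 1 ∧ MvMonic g} ×
        {h : MvPolynomial (Fin r) F // h.totalDegree = n - s ∧ MvMonic h} =>
      (⟨p.1.1 ^ s * p.2.1, by
        obtain ⟨⟨g, hg1, hgm⟩, ⟨h, hh1, hhm⟩⟩ := p
        have hg0 : g ≠ 0 := mvMonic_ne_zero hgm
        have hh0 : h ≠ 0 := mvMonic_ne_zero hhm
        have hgs0 : g ^ s ≠ 0 := pow_ne_zero s hg0
        refine ⟨?_, ?_, g, by omega, dvd_mul_right _ _⟩
        · rw [totalDegree_mul_eq hgs0 hh0, totalDegree_pow_eq hg0, hg1, hh1]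
          omega
        · rw [mvMonic_iff]
          refine ⟨mul_ne_zero hgs0 hh0, ?_⟩
          rw [lc_mul hgs0 hh0, lc_pow hg0, (mvMonic_iff.mp hgm).2,
            (mvMonic_iff.mp hhm).2, one_pow, one_mul]⟩ :
      {f : MvPolynomial (Fin r) F // f.totalDegree = n ∧ MvMonic f ∧
        ∃ g : MvPolynomial (Fin r) F, 0 < g.totalDegree ∧ g ^ s ∣ f})) := by
  constructor
  · rintro ⟨⟨g, hg1, hgm⟩, ⟨h, hh1, hhm⟩⟩ ⟨⟨g', hg1', hgm'⟩, ⟨h', hh1', hhm'⟩⟩ heq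
    have h0 : g ^ s * h = g' ^ s * h' := congrArg Subtype.val heq
    have hg0 : g ≠ 0 := mvMonic_ne_zero hgm
    have hg0' : g' ≠ 0 := mvMonic_ne_zero hgm'
    have hh0 : h ≠ 0 := mvMonic_ne_zero hhm
    have hh0' : h' ≠ 0 := mvMonic_ne_zero hhm'
    have hgg : g = g' := by
      by_contra hne
      have hprime : Prime g := prime_of_deg_one hg1
      have hdvd : g ^ s ∣ g' ^ s * h' := h0 ▸ dvd_mul_right _ _
      have hnd : ¬ g ∣ g' ^ s := by
        intro hd
        have := hprime.dvd_of_dvd_pow hd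
        exact hne (monic_dvd_eq hgm hgm' (by rw [hg1, hg1']) this)
      have hsh : g ^ s ∣ h' := hprime.pow_dvd_of_dvd_mul_left s hnd hdvd
      have hle := totalDegree_le_of_dvd hsh hh0'
      rw [totalDegree_pow_eq hg0, hg1, hh1'] at hle
      omega
    subst hgg
    have hhh : h = h' := mul_left_cancel₀ (pow_ne_zero s hg0) h0
    subst hhh
    rfl
  · rintro ⟨f, hfn, hfm, g0, hg0d, hdvd⟩
    obtain ⟨h0, rfl⟩ := hdvd
    have hf0 : g0 ^ s * h0 ≠ 0 := mvMonic_ne_zero hfm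
    have hg00 : g0 ≠ 0 := fun h => hf0 (by rw [h, zero_pow (by omega), zero_mul])
    have hh00 : h0 ≠ 0 := fun h => hf0 (by rw [h, mul_zero])
    have hgs0 : g0 ^ s ≠ 0 := pow_ne_zero s hg00
    have hdeg : s * g0.totalDegree + h0.totalDegree = n := by
      rw [← totalDegree_pow_eq hg00, ← totalDegree_mul_eq hgs0 hh00, hfn]
    have hg01 : g0.totalDegree = 1 := by
      by_contra hne
      have h2 : 2 ≤ g0.totalDegree := by omega
      have h3 : 2 * s ≤ s * g0.totalDegree := by nlinarith
      omega
    have hh0d : h0.totalDegree = n - s := by rw [hg01, mul_one] at hdeg; omega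
    -- normalize
    set a := g0.coeff (lm g0) with ha
    set b := h0.coeff (lm h0) with hb
    have ha0 : a ≠ 0 := lm_coeff_ne_zero hg00
    have hb0 : b ≠ 0 := lm_coeff_ne_zero hh00
    have hab : a ^ s * b = 1 := by
      have := (mvMonic_iff.mp hfm).2
      rw [lc_mul hgs0 hh00, lc_pow hg00] at this
      rw [← this]
    refine ⟨⟨⟨a⁻¹ • g0, ?_, smul_monic hg00⟩, ⟨b⁻¹ • h0, ?_, smul_monic hh00⟩⟩, ?_⟩
    · rw [totalDegree_smul_eq (inv_ne_zero ha0), hg01]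
    · rw [totalDegree_smul_eq (inv_ne_zero hb0), hh0d]
    · apply Subtype.ext
      show (a⁻¹ • g0) ^ s * (b⁻¹ • h0) = g0 ^ s * h0
      rw [smul_pow, smul_mul_smul_comm]
      have : (a⁻¹) ^ s * b⁻¹ = 1 := by
        rw [inv_pow, ← mul_inv, hab, inv_one]
      rw [this, one_smul]

end DLK

namespace DLK
variable {r : ℕ} {F : Type*} [Field F]

lemma qset_empty (n s : ℕ) (hs : 1 ≤ s) (hn : n < s) :
    {f : MvPolynomial (Fin r) F | f.totalDegree = n ∧ MvMonic f ∧
      ∃ g : MvPolynomial (Fin r) F, 0 < g.totalDegree ∧ g ^ s ∣ f} = ∅ := by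
  ext f
  simp only [Set.mem_setOf_eq, Set.mem_empty_iff_false, iff_false]
  rintro ⟨hfn, hfm, g, hgd, c, rfl⟩
  have hf0 : g ^ s * c ≠ 0 := mvMonic_ne_zero hfm
  have hg0 : g ≠ 0 := fun h => hf0 (by rw [h, zero_pow (by omega), zero_mul])
  have hc0 : c ≠ 0 := fun h => hf0 (by rw [h, mul_zero])
  have hdeg : s * g.totalDegree + c.totalDegree = n := by
    rw [← totalDegree_pow_eq hg0, ← totalDegree_mul_eq (pow_ne_zero s hg0) hc0, hfn]
  have h1 : s * 1 ≤ s * g.totalDegree := Nat.mul_le_mul_left s hgd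
  omega

end DLK

theorem stmt4 (q : ℕ) (F : Type) [Field F] [Fintype F] (hq : Fintype.card F = q)
    (r s : ℕ) (hr : 2 ≤ r) (hs : 2 ≤ s) :
    (∀ n : ℕ, n < s → Qcount F r n s = 0) ∧
    (∀ n : ℕ, s ≤ n → n < 2 * s → (Qcount F r n s : ℚ) = eta q r n s) := by
  have hq2 : 2 ≤ q := hq ▸ Fintype.one_lt_card
  constructor
  · intro n hn
    rw [Qcount, DLK.qset_empty n s (by omega) hn, Set.ncard_empty]
  · intro n hns hn2
    have hr1 : 1 ≤ r := by omega
    set d := n - s with hd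
    set N1 := Nat.card {g : MvPolynomial (Fin r) F // g.totalDegree = 1 ∧ MvMonic g} with hN1
    set Nd := Nat.card {h : MvPolynomial (Fin r) F // h.totalDegree = n - s ∧ MvMonic h} with hNd
    -- Qcount equals the product
    have hQ : Qcount F r n s = N1 * Nd := by
      rw [Qcount, ← Nat.card_coe_set_eq]
      have h := Nat.card_eq_of_bijective _
        (DLK.qset_equiv (F := F) (r := r) n s (by omega) hns hn2)
      rw [Nat.card_prod] at h
      exact h.symm
    -- counting equations
    have hc1 : (q - 1) * N1 + q ^ 1 = q ^ (r + 1) := by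
      have h1 := DLK.card_nonzero (F := F) hr1 1
      rw [DLK.monic_units_equiv 1, hq] at h1
      have e1 : (r + 1 - 1).choose r = 1 := by
        rw [show r + 1 - 1 = r by omega, Nat.choose_self]
      have e2 : (r + 1).choose r = r + 1 := Nat.choose_succ_self_right r
      rw [e1, e2] at h1
      exact h1
    set Ad := (r + d - 1).choose r with hAd
    set B := (r + d - 1).choose (r - 1) with hB
    have hpas : (r + d).choose r = Ad + B := DLK.pascal hr1 d
    have hcd : (q - 1) * Nd + q ^ Ad = q ^ (Ad + B) := by
      have h1 := DLK.card_nonzero (F := F) hr1 d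
      rw [DLK.monic_units_equiv d, hq, hpas] at h1
      exact h1
    -- pass to ℚ
    have ha0 : (q : ℚ) ≠ 0 := Nat.cast_ne_zero.mpr (by omega)
    have ha1 : (q : ℚ) - 1 ≠ 0 := by
      have h2 : (2 : ℚ) ≤ (q : ℚ) := by exact_mod_cast hq2
      intro h
      nlinarith
    have hc1Q : ((q : ℚ) - 1) * N1 = (q : ℚ) ^ (r + 1) - q := by
      have hcast := congrArg (Nat.cast : ℕ → ℚ) hc1
      push_cast [Nat.cast_sub (show 1 ≤ q by omega)] at hcast
      linarith
    have hcdQ : ((q : ℚ) - 1) * Nd = (q : ℚ) ^ (Ad + B) - (q : ℚ) ^ Ad := by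
      have hcast := congrArg (Nat.cast : ℕ → ℚ) hcd
      push_cast [Nat.cast_sub (show 1 ≤ q by omega)] at hcast
      linarith
    obtain ⟨u, hu⟩ : ∃ u, r = u + 1 := ⟨r - 1, by omega⟩
    have hchooseeq : (r + n - s).choose r + r - 1 = Ad + B + u := by
      have h1 : r + n - s = r + d := by omega
      rw [h1, hpas]
      omega
    have hB' : (r + n - s - 1).choose (r - 1) = B := by
      rw [show r + n - s - 1 = r + d - 1 by omega, hB]
    have hmul : ((N1 : ℚ) * Nd) * ((q : ℚ) - 1) ^ 2 =
        ((q : ℚ) ^ (r + 1) - q) * ((q : ℚ) ^ (Ad + B) - (q : ℚ) ^ Ad) := by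
      calc ((N1 : ℚ) * Nd) * ((q : ℚ) - 1) ^ 2
          = (((q : ℚ) - 1) * N1) * (((q : ℚ) - 1) * Nd) := by ring
        _ = _ := by rw [hc1Q, hcdQ]
    have heta : eta q r n s * ((q : ℚ) - 1) ^ 2 =
        ((q : ℚ) ^ (r + 1) - q) * ((q : ℚ) ^ (Ad + B) - (q : ℚ) ^ Ad) := by
      rw [eta, hchooseeq, hB', hu]
      simp only [inv_pow]
      field_simp
      ring
    rw [hQ]
    push_cast
    exact mul_right_cancel₀ (pow_ne_zero 2 ha1) (hmul.trans heta.symm)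
end

section
/- Let F_q be a finite field of characteristic p, and let ℓ, m, n ≥ 2 be integers with n = ℓm and p | n. Let c be the number of monic original polynomials f of degree n over F_q with f ∈ D_{n,ℓ}(F_q) ∩ D_{n,m}(F_q) and f ∉ F_q[x^p]. Then: (i) if p ∤ ℓ, then c ≤ q^{m + ⌈ℓ/p⌉ − 2}; (ii) if p | ℓ and ℓ < m, then, with b = ⌈(m − ℓ + 1)/ℓ⌉, c ≤ q^{m + ℓ − b + ⌈b/p⌉ − 2}. -/
open Polynomial

/-- `UPoly F n` is the set of monic original (i.e. vanishing at 0) polynomials of degree `n`. -/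
def UPoly (F : Type*) [CommRing F] (n : ℕ) : Set (Polynomial F) :=
  {f | f.Monic ∧ f.natDegree = n ∧ f.eval 0 = 0}

/-- `Dne F n e` is the set of monic original polynomials of degree `n` admitting a decomposition
with left component of degree `e` (and right component of degree `n / e`). -/
def Dne (F : Type*) [CommRing F] (n e : ℕ) : Set (Polynomial F) :=
  {f ∈ UPoly F n | ∃ g ∈ UPoly F e, ∃ h ∈ UPoly F (n / e), f = g.comp h}

/-- `f` lies in `F[x^p]`: every monomial of `f` has exponent divisible by `p`. -/
def InXpow {F : Type*} [CommRing F] (p : ℕ) (f : Polynomial F) : Prop :=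
  ∀ k ∈ f.support, p ∣ k

namespace Stmt12Aux
variable {F : Type} [Field F]

lemma monic_ext {d : ℕ} {h1 h2 : F[X]}
    (m1 : h1.Monic) (n1 : h1.natDegree = d) (e1 : h1.eval 0 = 0)
    (m2 : h2.Monic) (n2 : h2.natDegree = d) (e2 : h2.eval 0 = 0)
    (hag : ∀ k, 0 < k → k < d → h1.coeff k = h2.coeff k) : h1 = h2 := by
  ext k
  rcases Nat.lt_trichotomy k d with hk | rfl | hk
  · rcases Nat.eq_zero_or_pos k with rfl | hk0
    · rw [coeff_zero_eq_eval_zero, coeff_zero_eq_eval_zero, e1, e2]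
    · exact hag k hk0 hk
  · rw [← n1, m1.coeff_natDegree, n1, ← n2, m2.coeff_natDegree]
  · rw [coeff_eq_zero_of_natDegree_lt (by omega : h1.natDegree < k),
        coeff_eq_zero_of_natDegree_lt (by omega : h2.natDegree < k)]

lemma derivative_ne_zero {p : ℕ} [CharP F p] {f : F[X]} (h : ¬ InXpow p f) :
    derivative f ≠ 0 := by
  intro h0
  apply h
  intro k hk
  rcases Nat.eq_zero_or_pos k with rfl | hk1
  · exact dvd_zero p
  · have hco : (derivative f).coeff (k - 1) = 0 := by rw [h0, coeff_zero]
    rw [coeff_derivative] at hco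
    have h1 : k - 1 + 1 = k := by omega
    have h2 : ((k - 1 : ℕ) : F) + 1 = (k : F) := by
      exact_mod_cast congrArg (Nat.cast : ℕ → F) h1
    rw [h1, h2] at hco
    rcases mul_eq_zero.mp hco with h3 | h4
    · exact absurd h3 (mem_support_iff.mp hk)
    · exact (CharP.cast_eq_zero_iff F p k).mp h4

/-- coefficient of `h` at `k` vanishes when `k-1` exceeds the degree of `h'` and `p ∤ k`. -/
lemma coeff_eq_zero_of_deriv {p : ℕ} [CharP F p] {h : F[X]} {k : ℕ}
    (hk1 : 1 ≤ k) (hdeg : (derivative h).natDegree < k - 1) (hpk : ¬ p ∣ k) :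
    h.coeff k = 0 := by
  have hco : (derivative h).coeff (k - 1) = 0 := coeff_eq_zero_of_natDegree_lt hdeg
  rw [coeff_derivative] at hco
  have h1 : k - 1 + 1 = k := by omega
  have h2 : ((k - 1 : ℕ) : F) + 1 = (k : F) := by
    exact_mod_cast congrArg (Nat.cast : ℕ → F) h1
  rw [h1, h2] at hco
  rcases mul_eq_zero.mp hco with h3 | h4
  · exact h3
  · exact absurd ((CharP.cast_eq_zero_iff F p k).mp h4) hpk

lemma natDegree_derivative_ge {p : ℕ} [CharP F p] {g : F[X]} (hg : g.Monic)
    {e : ℕ} (hgd : g.natDegree = e) (he : 1 ≤ e) (hpe : ¬ p ∣ e) :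
    e - 1 ≤ (derivative g).natDegree := by
  apply le_natDegree_of_ne_zero
  rw [coeff_derivative]
  have h1 : e - 1 + 1 = e := by omega
  have h2 : ((e - 1 : ℕ) : F) + 1 = (e : F) := by
    exact_mod_cast congrArg (Nat.cast : ℕ → F) h1
  rw [h1, h2]
  have h3 : g.coeff e = 1 := by rw [← hgd]; exact hg.coeff_natDegree
  rw [h3, one_mul]
  exact fun h4 => hpe ((CharP.cast_eq_zero_iff F p e).mp h4)

lemma natDegree_derivative_le_sub_two {u : F[X]} (hu : u.Monic) {d : ℕ}
    (hud : u.natDegree = d) (hdF : (d : F) = 0) :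
    (derivative u).natDegree ≤ d - 2 := by
  refine natDegree_le_iff_coeff_eq_zero.mpr fun N hN => ?_
  rw [coeff_derivative]
  rcases Nat.lt_trichotomy (N + 1) d with h1 | h1 | h1
  · omega
  · have h3 : u.coeff (N + 1) = 1 := by rw [h1, ← hud]; exact hu.coeff_natDegree
    have h4 : ((N : ℕ) : F) + 1 = (d : F) := by exact_mod_cast congrArg (Nat.cast : ℕ → F) h1
    rw [h3, h4, hdF, one_mul]
  · rw [coeff_eq_zero_of_natDegree_lt (by omega), zero_mul]

/-- The master counting lemma: if every element of `S` decomposes as `g.comp h` with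
monic original `g`, `h` of degrees `e`, `d` and prescribed vanishing coefficients,
then `S` is small. -/
lemma count_main [Fintype F] (e d : ℕ) (Zg Zh : Finset ℕ)
    (hZg : Zg ⊆ Finset.Ioo 0 e) (hZh : Zh ⊆ Finset.Ioo 0 d)
    (S : Set F[X])
    (hS : ∀ f ∈ S, ∃ g h : F[X], g.Monic ∧ g.natDegree = e ∧ g.eval 0 = 0 ∧
      h.Monic ∧ h.natDegree = d ∧ h.eval 0 = 0 ∧ (∀ k ∈ Zg, g.coeff k = 0) ∧
      (∀ k ∈ Zh, h.coeff k = 0) ∧ f = g.comp h) :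
    S.ncard ≤ Fintype.card F ^ (e - 1 - Zg.card + (d - 1 - Zh.card)) := by
  classical
  set Ig : Finset ℕ := Finset.Ioo 0 e \ Zg with hIg
  set Ih : Finset ℕ := Finset.Ioo 0 d \ Zh with hIh
  have hcard : Fintype.card ((Ig → F) × (Ih → F))
      = Fintype.card F ^ (e - 1 - Zg.card + (d - 1 - Zh.card)) := by
    rw [Fintype.card_prod, Fintype.card_fun, Fintype.card_fun, Fintype.card_coe,
      Fintype.card_coe, hIg, hIh, Finset.card_sdiff_of_subset hZg, Finset.card_sdiff_of_subset hZh,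
      Nat.card_Ioo, Nat.card_Ioo, ← pow_add]
    congr 1
  rw [← hcard, ← Nat.card_eq_fintype_card, ← Nat.card_coe_set_eq]
  set G : ∀ f : S, F[X] := fun f => (hS f.1 f.2).choose with hG
  set H : ∀ f : S, F[X] := fun f => (hS f.1 f.2).choose_spec.choose with hH
  have spec : ∀ f : S, (G f).Monic ∧ (G f).natDegree = e ∧ (G f).eval 0 = 0 ∧
      (H f).Monic ∧ (H f).natDegree = d ∧ (H f).eval 0 = 0 ∧
      (∀ k ∈ Zg, (G f).coeff k = 0) ∧ (∀ k ∈ Zh, (H f).coeff k = 0) ∧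
      (f : F[X]) = (G f).comp (H f) := fun f => (hS f.1 f.2).choose_spec.choose_spec
  apply Nat.card_le_card_of_injective
    (fun f : S => ((fun k : Ig => (G f).coeff k, fun k : Ih => (H f).coeff k) :
      (Ig → F) × (Ih → F)))
  intro f1 f2 hf
  obtain ⟨hfg, hfh⟩ := Prod.mk.injEq .. ▸ hf
  obtain ⟨g1m, g1d, g1e, h1m, h1d, h1e, g1z, h1z, f1eq⟩ := spec f1
  obtain ⟨g2m, g2d, g2e, h2m, h2d, h2e, g2z, h2z, f2eq⟩ := spec f2
  have hGeq : G f1 = G f2 := by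
    refine monic_ext g1m g1d g1e g2m g2d g2e fun k hk0 hke => ?_
    by_cases hkz : k ∈ Zg
    · rw [g1z k hkz, g2z k hkz]
    · exact congrFun hfg ⟨k, by simp [hIg, Finset.mem_sdiff, hkz, hk0, hke]⟩
  have hHeq : H f1 = H f2 := by
    refine monic_ext h1m h1d h1e h2m h2d h2e fun k hk0 hkd => ?_
    by_cases hkz : k ∈ Zh
    · rw [h1z k hkz, h2z k hkz]
    · exact congrFun hfh ⟨k, by simp [hIh, Finset.mem_sdiff, hkz, hk0, hkd]⟩
  ext1
  rw [f1eq, f2eq, hGeq, hHeq]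

/-- Counting multiples of `p` in the interval `(M-L, M)` when `p ∣ M`. -/
lemma card_filter_not_dvd (p L M : ℕ) (hp : 0 < p) (hpM : p ∣ M) (hLM : L ≤ M) (hL : 1 ≤ L) :
    (L - 1) - (L - 1) / p ≤
      ((Finset.Ioo (M - L) M).filter (fun k => ¬ p ∣ k)).card := by
  classical
  have hIcard : (Finset.Ioo (M - L) M).card = L - 1 := by rw [Nat.card_Ioo]; omega
  have hsplit := Finset.card_filter_add_card_filter_not
    (s := Finset.Ioo (M - L) M) (p := fun k => p ∣ k)
  have hmul : ((Finset.Ioo (M - L) M).filter (fun k => p ∣ k)).card ≤ (L - 1) / p := by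
    have : ((Finset.Ioo (M - L) M).filter (fun k => p ∣ k)).card ≤
        (Finset.Icc 1 ((L - 1) / p)).card := by
      apply Finset.card_le_card_of_injOn (fun k => (M - k) / p)
      · intro k hk
        simp only [Finset.mem_coe, Finset.mem_filter, Finset.mem_Ioo] at hk
        obtain ⟨⟨hk1, hk2⟩, hk3⟩ := hk
        have hdvd : p ∣ M - k := Nat.dvd_sub hpM hk3
        have h1 : 1 ≤ M - k := by omega
        have h2 : M - k ≤ L - 1 := by omega
        have h3 : p ≤ M - k := Nat.le_of_dvd h1 hdvd
        simp only [Finset.mem_coe, Finset.mem_Icc]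
        exact ⟨(Nat.one_le_div_iff hp).mpr h3, Nat.div_le_div_right h2⟩
      · intro k1 hk1 k2 hk2 heq
        simp only [Finset.coe_filter, Finset.mem_Ioo, Set.mem_setOf_eq] at hk1 hk2
        have d1 : p ∣ M - k1 := Nat.dvd_sub hpM hk1.2
        have d2 : p ∣ M - k2 := Nat.dvd_sub hpM hk2.2
        have e1 : p * ((M - k1) / p) = M - k1 := Nat.mul_div_cancel' d1
        have e2 : p * ((M - k2) / p) = M - k2 := Nat.mul_div_cancel' d2
        have heq' : (M - k1) / p = (M - k2) / p := heq
        have : M - k1 = M - k2 := by rw [← e1, ← e2, heq']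
        omega
    simpa [Nat.card_Icc] using this
  omega

lemma case_i {p : ℕ} [CharP F p] {ℓ m : ℕ} (hl : 2 ≤ ℓ) (hm : 2 ≤ m)
    (hpl : ¬ p ∣ ℓ) (hpm : p ∣ m) {f g h u v : F[X]}
    (hg : g.Monic) (hgd : g.natDegree = ℓ)
    (hh : h.Monic) (hhd : h.natDegree = m)
    (hu : u.Monic) (hud : u.natDegree = m)
    (hv : v.Monic) (hvd : v.natDegree = ℓ)
    (hf1 : f = g.comp h) (hf2 : f = u.comp v) (hfp : ¬ InXpow p f) :
    (derivative h).natDegree + ℓ + 1 ≤ m := by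
  have hDf : derivative f ≠ 0 := derivative_ne_zero hfp
  have e1 : derivative f = derivative h * (derivative g).comp h := by
    rw [hf1, derivative_comp]
  have e2 : derivative f = derivative v * (derivative u).comp v := by
    rw [hf2, derivative_comp]
  have hDh : derivative h ≠ 0 := by
    intro h0; rw [e1, h0, zero_mul] at hDf; exact hDf rfl
  have hDgh : (derivative g).comp h ≠ 0 := by
    intro h0; rw [e1, h0, mul_zero] at hDf; exact hDf rfl
  have hlow : ℓ * m - m + (derivative h).natDegree ≤ (derivative f).natDegree := by
    rw [e1, natDegree_mul hDh hDgh, natDegree_comp, hhd]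
    have h5 : ℓ - 1 ≤ (derivative g).natDegree :=
      natDegree_derivative_ge hg hgd (by omega) hpl
    have h6 : (ℓ - 1) * m ≤ (derivative g).natDegree * m := mul_le_mul_left h5 m
    have h7 : (ℓ - 1) * m = ℓ * m - m := by rw [Nat.sub_mul, one_mul]
    omega
  have hup : (derivative f).natDegree ≤ (ℓ - 1) + (m * ℓ - 2 * ℓ) := by
    rw [e2]
    have hmF : ((m : ℕ) : F) = 0 := (CharP.cast_eq_zero_iff F p m).mpr hpm
    have t1 : (derivative v).natDegree ≤ ℓ - 1 := hvd ▸ natDegree_derivative_le v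
    have t2 : ((derivative u).comp v).natDegree ≤ (m - 2) * ℓ := by
      refine natDegree_comp_le.trans ?_
      rw [hvd]
      exact mul_le_mul_left (natDegree_derivative_le_sub_two hu hud hmF) ℓ
    have t3 := natDegree_mul_le (p := derivative v) (q := (derivative u).comp v)
    have t4 : (m - 2) * ℓ = m * ℓ - 2 * ℓ := by rw [Nat.sub_mul]
    omega
  have h3 : m ≤ ℓ * m := Nat.le_mul_of_pos_left m (by omega)
  have h4 : 2 * ℓ ≤ m * ℓ := mul_le_mul_left hm ℓ
  have h5 : m * ℓ = ℓ * m := Nat.mul_comm m ℓ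
  rw [h5] at hup h4
  set X := (derivative f).natDegree
  set A := ℓ * m
  omega

lemma case_ii {p : ℕ} [CharP F p] {ℓ m b : ℕ} (hl : 2 ≤ ℓ) (hm : 2 ≤ m)
    (hpl : p ∣ ℓ) (hbl : ℓ * b ≤ m) (hb1 : 1 ≤ b) {f g h u v : F[X]}
    (hg : g.Monic) (hgd : g.natDegree = ℓ)
    (hh : h.Monic) (hhd : h.natDegree = m)
    (hu : u.Monic) (hud : u.natDegree = m)
    (hv : v.Monic) (hvd : v.natDegree = ℓ)
    (hf1 : f = g.comp h) (hf2 : f = u.comp v) (hfp : ¬ InXpow p f) :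
    (derivative u).natDegree + b + 1 ≤ m ∧ p ∣ m := by
  have hDf : derivative f ≠ 0 := derivative_ne_zero hfp
  have e1 : derivative f = derivative h * (derivative g).comp h := by
    rw [hf1, derivative_comp]
  have e2 : derivative f = derivative v * (derivative u).comp v := by
    rw [hf2, derivative_comp]
  have hDv : derivative v ≠ 0 := by
    intro h0; rw [e2, h0, zero_mul] at hDf; exact hDf rfl
  have hDuv : (derivative u).comp v ≠ 0 := by
    intro h0; rw [e2, h0, mul_zero] at hDf; exact hDf rfl
  have hlow : (derivative u).natDegree * ℓ ≤ (derivative f).natDegree := by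
    rw [e2, natDegree_mul hDv hDuv, natDegree_comp, hvd]
    omega
  have hup : (derivative f).natDegree ≤ (m - 1) + (ℓ * m - 2 * m) := by
    rw [e1]
    have hlF : ((ℓ : ℕ) : F) = 0 := (CharP.cast_eq_zero_iff F p ℓ).mpr hpl
    have t1 : (derivative h).natDegree ≤ m - 1 := hhd ▸ natDegree_derivative_le h
    have t2 : ((derivative g).comp h).natDegree ≤ (ℓ - 2) * m := by
      refine natDegree_comp_le.trans ?_
      rw [hhd]
      exact mul_le_mul_left (natDegree_derivative_le_sub_two hg hgd hlF) m
    have t3 := natDegree_mul_le (p := derivative h) (q := (derivative g).comp h)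
    have t4 : (ℓ - 2) * m = ℓ * m - 2 * m := by rw [Nat.sub_mul]
    omega
  have c4 : 2 * m ≤ ℓ * m := mul_le_mul_left hl m
  have key : (derivative u).natDegree + b + 1 ≤ m := by
    by_contra hcon
    push_neg at hcon
    have c1 : ℓ * m ≤ ℓ * ((derivative u).natDegree + b) :=
      mul_le_mul_right (by omega) ℓ
    have c2 : ℓ * ((derivative u).natDegree + b)
        = ℓ * (derivative u).natDegree + ℓ * b := Nat.mul_add ℓ _ b
    have c3 : (derivative u).natDegree * ℓ = ℓ * (derivative u).natDegree :=
      Nat.mul_comm _ ℓ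
    set d := (derivative u).natDegree
    set A := ℓ * m
    set B := ℓ * d
    set C := ℓ * b
    set D := ℓ * (d + b)
    set X := (derivative f).natDegree
    omega
  refine ⟨key, ?_⟩
  by_contra hpm
  have : m - 1 ≤ (derivative u).natDegree :=
    natDegree_derivative_ge hu hud (by omega) hpm
  omega

end Stmt12Aux

theorem stmt12 (q : ℕ) (F : Type) [Field F] [Fintype F] (hq : Fintype.card F = q)
    (p : ℕ) (hp : ringChar F = p) (ℓ m n : ℕ) (hl : 2 ≤ ℓ) (hm : 2 ≤ m) (hn2 : 2 ≤ n)
    (hn : n = ℓ * m) (hpn : p ∣ n)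
    (c : ℕ) (hc : c = Set.ncard {f | f ∈ Dne F n ℓ ∩ Dne F n m ∧ ¬ InXpow p f})
    (b : ℕ) (hb : b = (m - ℓ + 1 + ℓ - 1) / ℓ) :  -- b = ⌈(m - ℓ + 1) / ℓ⌉
    (¬ p ∣ ℓ → c ≤ q ^ (m + (ℓ + p - 1) / p - 2)) ∧  -- (ℓ + p - 1) / p = ⌈ℓ / p⌉
    (p ∣ ℓ → ℓ < m → c ≤ q ^ (m + ℓ - b + (b + p - 1) / p - 2)) := by
  classical
  haveI hcharP : CharP F p := hp ▸ ringChar.charP F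
  have hprime : p.Prime := CharP.char_is_prime F p
  have hppos : 0 < p := hprime.pos
  have hq1 : 1 ≤ q := hq ▸ Fintype.card_pos
  set S : Set F[X] := {f | f ∈ Dne F n ℓ ∩ Dne F n m ∧ ¬ InXpow p f} with hSdef
  have hnl : n / ℓ = m := by rw [hn]; exact Nat.mul_div_cancel_left m (by omega)
  have hnm : n / m = ℓ := by rw [hn]; exact Nat.mul_div_cancel ℓ (by omega)
  have decomp : ∀ f ∈ S,
      (∃ g h : F[X], g.Monic ∧ g.natDegree = ℓ ∧ g.eval 0 = 0 ∧
        h.Monic ∧ h.natDegree = m ∧ h.eval 0 = 0 ∧ f = g.comp h) ∧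
      (∃ u v : F[X], u.Monic ∧ u.natDegree = m ∧ u.eval 0 = 0 ∧
        v.Monic ∧ v.natDegree = ℓ ∧ v.eval 0 = 0 ∧ f = u.comp v) ∧ ¬ InXpow p f := by
    intro f hf
    obtain ⟨⟨h1, h2⟩, h3⟩ := hf
    simp only [Dne, UPoly, Set.mem_setOf_eq] at h1 h2
    obtain ⟨-, g, ⟨gm, gd, ge⟩, h, ⟨hmo, hd, he'⟩, hfe⟩ := h1
    obtain ⟨-, u, ⟨um, ud, ue⟩, v, ⟨vm, vd, ve⟩, hfe2⟩ := h2
    rw [hnl] at hd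
    rw [hnm] at vd
    exact ⟨⟨g, h, gm, gd, ge, hmo, hd, he', hfe⟩,
      ⟨u, v, um, ud, ue, vm, vd, ve, hfe2⟩, h3⟩
  constructor
  · -- case (i) : p does not divide ℓ
    intro hpl
    have hpm : p ∣ m := (hprime.dvd_mul.mp (by rwa [hn] at hpn)).resolve_left hpl
    rcases Set.eq_empty_or_nonempty S with hS0 | ⟨f0, hf0⟩
    · rw [hc, hS0, Set.ncard_empty]; exact Nat.zero_le _
    set Z : Finset ℕ := (Finset.Ioo (m - ℓ) m).filter (fun k => ¬ p ∣ k) with hZ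
    have hlm : ℓ + 1 ≤ m := by
      obtain ⟨⟨g, h, gm, gd, ge, hmo, hd, he', hfe⟩,
        ⟨u, v, um, ud, ue, vm, vd, ve, hfe2⟩, hxp⟩ := decomp f0 hf0
      have := Stmt12Aux.case_i hl hm hpl hpm gm gd hmo hd um ud vm vd hfe hfe2 hxp
      omega
    have hZsub : Z ⊆ Finset.Ioo 0 m := by
      intro k hk
      simp only [hZ, Finset.mem_filter, Finset.mem_Ioo] at hk ⊢
      omega
    have hcount : ∀ f ∈ S, ∃ g h : F[X], g.Monic ∧ g.natDegree = ℓ ∧ g.eval 0 = 0 ∧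
        h.Monic ∧ h.natDegree = m ∧ h.eval 0 = 0 ∧
        (∀ k ∈ (∅ : Finset ℕ), g.coeff k = 0) ∧
        (∀ k ∈ Z, h.coeff k = 0) ∧ f = g.comp h := by
      intro f hf
      obtain ⟨⟨g, h, gm, gd, ge, hmo, hd, he', hfe⟩,
        ⟨u, v, um, ud, ue, vm, vd, ve, hfe2⟩, hxp⟩ := decomp f hf
      have hkey := Stmt12Aux.case_i hl hm hpl hpm gm gd hmo hd um ud vm vd hfe hfe2 hxp
      refine ⟨g, h, gm, gd, ge, hmo, hd, he', by simp, ?_, hfe⟩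
      intro k hk
      simp only [hZ, Finset.mem_filter, Finset.mem_Ioo] at hk
      exact Stmt12Aux.coeff_eq_zero_of_deriv (by omega) (by omega) hk.2
    have hbound := Stmt12Aux.count_main ℓ m ∅ Z (by simp) hZsub S hcount
    have hzlow : (ℓ - 1) - (ℓ - 1) / p ≤ Z.card :=
      Stmt12Aux.card_filter_not_dvd p ℓ m hppos hpm (by omega) (by omega)
    have hzhigh : Z.card ≤ ℓ - 1 := by
      have h1 : Z.card ≤ (Finset.Ioo (m - ℓ) m).card := Finset.card_filter_le _ _
      rw [Nat.card_Ioo] at h1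
      omega
    have hceil : (ℓ + p - 1) / p = (ℓ - 1) / p + 1 := by
      have h1 : ℓ + p - 1 = ℓ - 1 + p := by omega
      rw [h1, Nat.add_div_right _ hppos]
    have hdivle : (ℓ - 1) / p ≤ ℓ - 1 := Nat.div_le_self _ _
    rw [hc]
    calc S.ncard ≤ Fintype.card F ^ (ℓ - 1 - (∅ : Finset ℕ).card + (m - 1 - Z.card)) :=
          hbound
      _ = q ^ (ℓ - 1 - (∅ : Finset ℕ).card + (m - 1 - Z.card)) := by rw [hq]
      _ ≤ q ^ (m + (ℓ + p - 1) / p - 2) := by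
          apply Nat.pow_le_pow_right hq1
          simp only [Finset.card_empty, Nat.sub_zero]
          omega
  · -- case (ii) : p divides ℓ and ℓ < m
    intro hpl hlm
    have hbm : b = m / ℓ := by rw [hb]; congr 1; omega
    have hb1 : 1 ≤ b := by
      rw [hbm]; exact (Nat.one_le_div_iff (by omega)).mpr (by omega)
    have hbl : ℓ * b ≤ m := by
      rw [hbm, Nat.mul_comm]; exact Nat.div_mul_le_self m ℓ
    have hbm2 : b < m := by rw [hbm]; exact Nat.div_lt_self (by omega) (by omega)
    rcases Set.eq_empty_or_nonempty S with hS0 | ⟨f0, hf0⟩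
    · rw [hc, hS0, Set.ncard_empty]; exact Nat.zero_le _
    set Z : Finset ℕ := (Finset.Ioo (m - b) m).filter (fun k => ¬ p ∣ k) with hZ
    have hpm : p ∣ m := by
      obtain ⟨⟨g, h, gm, gd, ge, hmo, hd, he', hfe⟩,
        ⟨u, v, um, ud, ue, vm, vd, ve, hfe2⟩, hxp⟩ := decomp f0 hf0
      exact (Stmt12Aux.case_ii hl hm hpl hbl hb1 gm gd hmo hd um ud vm vd hfe hfe2 hxp).2
    have hZsub : Z ⊆ Finset.Ioo 0 m := by
      intro k hk
      simp only [hZ, Finset.mem_filter, Finset.mem_Ioo] at hk ⊢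
      omega
    have hcount : ∀ f ∈ S, ∃ g h : F[X], g.Monic ∧ g.natDegree = m ∧ g.eval 0 = 0 ∧
        h.Monic ∧ h.natDegree = ℓ ∧ h.eval 0 = 0 ∧
        (∀ k ∈ Z, g.coeff k = 0) ∧
        (∀ k ∈ (∅ : Finset ℕ), h.coeff k = 0) ∧ f = g.comp h := by
      intro f hf
      obtain ⟨⟨g, h, gm, gd, ge, hmo, hd, he', hfe⟩,
        ⟨u, v, um, ud, ue, vm, vd, ve, hfe2⟩, hxp⟩ := decomp f hf
      have hkey :=
        (Stmt12Aux.case_ii hl hm hpl hbl hb1 gm gd hmo hd um ud vm vd hfe hfe2 hxp).1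
      refine ⟨u, v, um, ud, ue, vm, vd, ve, ?_, by simp, hfe2⟩
      intro k hk
      simp only [hZ, Finset.mem_filter, Finset.mem_Ioo] at hk
      exact Stmt12Aux.coeff_eq_zero_of_deriv (by omega) (by omega) hk.2
    have hbound := Stmt12Aux.count_main m ℓ Z ∅ hZsub (by simp) S hcount
    have hzlow : (b - 1) - (b - 1) / p ≤ Z.card :=
      Stmt12Aux.card_filter_not_dvd p b m hppos hpm (by omega) hb1
    have hzhigh : Z.card ≤ b - 1 := by
      have h1 : Z.card ≤ (Finset.Ioo (m - b) m).card := Finset.card_filter_le _ _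
      rw [Nat.card_Ioo] at h1
      omega
    have hceil : (b + p - 1) / p = (b - 1) / p + 1 := by
      have h1 : b + p - 1 = b - 1 + p := by omega
      rw [h1, Nat.add_div_right _ hppos]
    have hdivle : (b - 1) / p ≤ b - 1 := Nat.div_le_self _ _
    rw [hc]
    calc S.ncard ≤ Fintype.card F ^ (m - 1 - Z.card + (ℓ - 1 - (∅ : Finset ℕ).card)) :=
          hbound
      _ = q ^ (m - 1 - Z.card + (ℓ - 1 - (∅ : Finset ℕ).card)) := by rw [hq]
      _ ≤ q ^ (m + ℓ - b + (b + p - 1) / p - 2) := by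
          apply Nat.pow_le_pow_right hq1
          simp only [Finset.card_empty, Nat.sub_zero]
          omega
end

section
/- Let F be a field of characteristic p > 0, let r be a power of p, let u, s ∈ F with u ≠ 0 and s ≠ 0, let ε ∈ {0, 1}, let m be a positive divisor of r − 1, and set ℓ = (r − 1)/m. Define f = x·(x^{ℓ(r+1)} − ε·u·s^r·x^ℓ + u·s^{r+1})^m and T = {t ∈ F : t^{r+1} − ε·u·t + u = 0}. Then every t ∈ T is nonzero, and for each t ∈ T, setting g_t = x·(x^ℓ − u·s^r·t^{−1})^m and h_t = x·(x^ℓ − s·t)^m, one has f = g_t ∘ h_t; moreover the map t ↦ (g_t, h_t) is injective on T, so f has (at least) #T distinct decompositions into monic original polynomials of degree r. -/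
open Polynomial

theorem stmt17 (F : Type) [Field F] (p : ℕ) (hp : ringChar F = p) (hppos : 0 < p)
    (r : ℕ) (hr : ∃ k : ℕ, 0 < k ∧ r = p ^ k)
    (u s : F) (hu : u ≠ 0) (hs : s ≠ 0) (ε : F) (hε : ε = 0 ∨ ε = 1)
    (m ℓ : ℕ) (hm : 0 < m) (hmr : m ∣ r - 1) (hℓ : ℓ = (r - 1) / m)
    (f : Polynomial F)
    (hf : f = X * (X ^ (ℓ * (r + 1)) - C (ε * u * s ^ r) * X ^ ℓ + C (u * s ^ (r + 1))) ^ m)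
    (T : Set F) (hT : T = {t : F | t ^ (r + 1) - ε * u * t + u = 0})
    (g h : F → Polynomial F)
    (hg : ∀ t : F, g t = X * (X ^ ℓ - C (u * s ^ r * t⁻¹)) ^ m)
    (hh : ∀ t : F, h t = X * (X ^ ℓ - C (s * t)) ^ m) :
    (∀ t ∈ T, t ≠ 0) ∧
    (∀ t ∈ T, f = (g t).comp (h t) ∧
      (g t).Monic ∧ (g t).natDegree = r ∧ (g t).eval 0 = 0 ∧
      (h t).Monic ∧ (h t).natDegree = r ∧ (h t).eval 0 = 0) ∧
    Set.InjOn (fun t => (g t, h t)) T := by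
  have hcharP : CharP F p := hp ▸ ringChar.charP F
  have hpprime : p.Prime := by
    rcases CharP.char_is_prime_or_zero F p with h | h
    · exact h
    · omega
  haveI : Fact p.Prime := ⟨hpprime⟩
  obtain ⟨k, hk, hrk⟩ := hr
  have hr2 : 2 ≤ r := by
    have : p ^ 1 ≤ p ^ k := Nat.pow_le_pow_right hpprime.pos hk
    have := hpprime.two_le
    simp only [pow_one] at *
    omega
  have hml : m * ℓ = r - 1 := by rw [hℓ]; exact Nat.mul_div_cancel' hmr
  have hℓpos : 0 < ℓ := by
    rcases Nat.eq_zero_or_pos ℓ with h0 | h0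
    · subst h0; simp at hml; omega
    · exact h0
  -- t nonzero
  have hTne : ∀ t ∈ T, t ≠ 0 := by
    intro t ht ht0
    rw [hT, Set.mem_setOf_eq, ht0] at ht
    simp at ht
    exact hu ht
  refine ⟨hTne, ?_, ?_⟩
  · intro t ht
    have htne : t ≠ 0 := hTne t ht
    have hteq : t ^ (r + 1) - ε * u * t + u = 0 := by rw [hT] at ht; exact ht
    -- monicity and degrees
    have hQg : ((X : F[X]) ^ ℓ - C (u * s ^ r * t⁻¹)).Monic := monic_X_pow_sub_C _ hℓpos.ne'
    have hQh : ((X : F[X]) ^ ℓ - C (s * t)).Monic := monic_X_pow_sub_C _ hℓpos.ne'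
    have hgmonic : (g t).Monic := by rw [hg]; exact monic_X.mul (hQg.pow m)
    have hhmonic : (h t).Monic := by rw [hh]; exact monic_X.mul (hQh.pow m)
    have hdegQ : ((X : F[X]) ^ ℓ - C (u * s ^ r * t⁻¹)).natDegree = ℓ := natDegree_X_pow_sub_C
    have hdegQh : ((X : F[X]) ^ ℓ - C (s * t)).natDegree = ℓ := natDegree_X_pow_sub_C
    have hgdeg : (g t).natDegree = r := by
      rw [hg, natDegree_mul X_ne_zero (pow_ne_zero _ hQg.ne_zero), natDegree_X,
        natDegree_pow, hdegQ, hml]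
      omega
    have hhdeg : (h t).natDegree = r := by
      rw [hh, natDegree_mul X_ne_zero (pow_ne_zero _ hQh.ne_zero), natDegree_X,
        natDegree_pow, hdegQh, hml]
      omega
    have hgeval : (g t).eval 0 = 0 := by rw [hg]; simp
    have hheval : (h t).eval 0 = 0 := by rw [hh]; simp
    -- the key scalar identities
    have e1 : (s * t) ^ r + u * s ^ r * t⁻¹ = ε * u * s ^ r := by
      field_simp
      ring_nf
      ring_nf at hteq
      linear_combination s ^ r * hteq
    have e2 : u * s ^ r * t⁻¹ * (s * t) = u * s ^ (r + 1) := by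
      field_simp
      ring
    -- Frobenius
    have hfrob : ((X : F[X]) ^ ℓ - C (s * t)) ^ r = X ^ (ℓ * r) - C ((s * t) ^ r) := by
      rw [hrk, sub_pow_char_pow, ← C_pow, ← pow_mul]
    -- key polynomial identity
    have key : ((X : F[X]) ^ ℓ - C (s * t)) *
        ((X : F[X]) ^ ℓ * ((X : F[X]) ^ ℓ - C (s * t)) ^ (m * ℓ) - C (u * s ^ r * t⁻¹)) =
        X ^ (ℓ * (r + 1)) - C (ε * u * s ^ r) * X ^ ℓ + C (u * s ^ (r + 1)) := by
      have hrr : m * ℓ + 1 = r := by omega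
      calc ((X : F[X]) ^ ℓ - C (s * t)) *
          ((X : F[X]) ^ ℓ * ((X : F[X]) ^ ℓ - C (s * t)) ^ (m * ℓ) - C (u * s ^ r * t⁻¹))
          = (X : F[X]) ^ ℓ * ((X : F[X]) ^ ℓ - C (s * t)) ^ (m * ℓ + 1)
            - C (u * s ^ r * t⁻¹) * ((X : F[X]) ^ ℓ - C (s * t)) := by ring
        _ = (X : F[X]) ^ ℓ * (X ^ (ℓ * r) - C ((s * t) ^ r))
            - C (u * s ^ r * t⁻¹) * ((X : F[X]) ^ ℓ - C (s * t)) := by rw [hrr, hfrob]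
        _ = X ^ (ℓ * (r + 1)) - C ((s * t) ^ r + u * s ^ r * t⁻¹) * X ^ ℓ
            + C (u * s ^ r * t⁻¹ * (s * t)) := by
            simp only [C_add, C_mul, C_pow]
            have : ℓ * (r + 1) = ℓ + ℓ * r := by ring
            rw [this, pow_add]
            ring
        _ = X ^ (ℓ * (r + 1)) - C (ε * u * s ^ r) * X ^ ℓ + C (u * s ^ (r + 1)) := by
            rw [e1, e2]
    have hcomp : f = (g t).comp (h t) := by
      rw [hg, hh, hf]
      simp only [mul_comp, pow_comp, sub_comp, X_comp, C_comp]
      rw [mul_pow, ← pow_mul, ← key, mul_pow]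
      ring
    exact ⟨hcomp, hgmonic, hgdeg, hgeval, hhmonic, hhdeg, hheval⟩
  · -- injectivity
    intro t ht t' ht' heq
    simp only [Prod.mk.injEq] at heq
    have hht : h t = h t' := heq.2
    rw [hh t, hh t'] at hht
    have hQ : ((X : F[X]) ^ ℓ - C (s * t)) ^ m = ((X : F[X]) ^ ℓ - C (s * t')) ^ m :=
      mul_left_cancel₀ X_ne_zero hht
    -- pass to algebraic closure
    set K := AlgebraicClosure F
    obtain ⟨α, hα⟩ := IsAlgClosed.exists_pow_nat_eq (algebraMap F K (s * t)) hℓpos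
    have := congrArg (aeval α) hQ
    simp only [map_pow, map_sub, aeval_X, aeval_C, hα, sub_self, zero_pow hm.ne'] at this
    have h2 : algebraMap F K (s * t) - algebraMap F K (s * t') = 0 :=
      pow_eq_zero_iff hm.ne' |>.mp this.symm
    have h3 : algebraMap F K (s * t) = algebraMap F K (s * t') := sub_eq_zero.mp h2
    have h4 : s * t = s * t' := (algebraMap F K).injective h3
    exact mul_left_cancel₀ hs h4
end

section
/- Let F be a field of characteristic p > 0, let r be a power of p, let b ∈ F with b ≠ 0, let a ∈ F with a ≠ 0 and a ≠ b^r, set a* = b^r − a, let m be an integer with 1 < m < r − 1 and p ∤ m, and set m* = r − m. Define g = x^m·(x − a)^{m*}, h = x^r + a*·b^{−r}·(x^{m*}·(x − b)^m − x^r), g* = x^{m*}·(x − a*)^m, h* = x^r + a·b^{−r}·(x^m·(x − b)^{m*} − x^r), and f = x^{m·m*}·(x − b)^{m·m*}·(x^m + a*·b^{−r}·((x − b)^m − x^m))^m·(x^{m*} + a·b^{−r}·((x − b)^{m*} − x^{m*}))^{m*}. Then f = g∘h = g*∘h*, f is a monic original polynomial of degree r², and (g, h) ≠ (g*, h*), so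 f has a 2-collision. -/
open Polynomial

theorem stmt18 (F : Type) [Field F] (p : ℕ) (hp : ringChar F = p) (hppos : 0 < p)
    (r : ℕ) (hr : ∃ k : ℕ, 0 < k ∧ r = p ^ k)
    (b : F) (hb : b ≠ 0) (a : F) (ha : a ≠ 0) (hab : a ≠ b ^ r)
    (a' : F) (ha' : a' = b ^ r - a)
    (m : ℕ) (hm1 : 1 < m) (hm2 : m < r - 1) (hpm : ¬ p ∣ m)
    (m' : ℕ) (hm' : m' = r - m)
    (f g h g' h' : Polynomial F)
    (hg : g = X ^ m * (X - C a) ^ m')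
    (hh : h = X ^ r + C (a' * (b ^ r)⁻¹) * (X ^ m' * (X - C b) ^ m - X ^ r))
    (hg' : g' = X ^ m' * (X - C a') ^ m)
    (hh' : h' = X ^ r + C (a * (b ^ r)⁻¹) * (X ^ m * (X - C b) ^ m' - X ^ r))
    (hf : f = X ^ (m * m') * (X - C b) ^ (m * m') *
      (X ^ m + C (a' * (b ^ r)⁻¹) * ((X - C b) ^ m - X ^ m)) ^ m *
      (X ^ m' + C (a * (b ^ r)⁻¹) * ((X - C b) ^ m' - X ^ m')) ^ m') :
    f = g.comp h ∧ f = g'.comp h' ∧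
    f.Monic ∧ f.natDegree = r ^ 2 ∧ f.eval 0 = 0 ∧
    g.Monic ∧ g.natDegree = r ∧ g.eval 0 = 0 ∧
    h.Monic ∧ h.natDegree = r ∧ h.eval 0 = 0 ∧
    g'.Monic ∧ g'.natDegree = r ∧ g'.eval 0 = 0 ∧
    h'.Monic ∧ h'.natDegree = r ∧ h'.eval 0 = 0 ∧
    (g, h) ≠ (g', h') := by
  haveI : CharP F p := hp ▸ ringChar.charP F
  haveI hFact : Fact p.Prime := ⟨(CharP.char_is_prime_or_zero F p).resolve_right (by omega)⟩
  have hbr : b ^ r ≠ 0 := pow_ne_zero _ hb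
  set c := a * (b ^ r)⁻¹ with hc
  set c' := a' * (b ^ r)⁻¹ with hc'
  have ha'0 : a' ≠ 0 := by
    rw [ha']; intro h0; apply hab; linear_combination -h0
  have hc0 : c ≠ 0 := mul_ne_zero ha (inv_ne_zero hbr)
  have hc'0 : c' ≠ 0 := mul_ne_zero ha'0 (inv_ne_zero hbr)
  have hca : a = c * b ^ r := by rw [hc]; field_simp
  have hca' : a' = c' * b ^ r := by rw [hc']; field_simp
  have hcc : c + c' = 1 := by rw [hc, hc', ha']; field_simp; ring
  have hc'eq : c' = 1 - c := by linear_combination hcc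
  have hCc' : (C c' : F[X]) = 1 - C c := by rw [hc'eq]; simp
  -- char p frobenius
  have key : ((X : F[X]) - C b) ^ r = X ^ r - C (b ^ r) := by
    obtain ⟨k, hk, hrk⟩ := hr
    subst hrk
    rw [sub_pow_char_pow, ← C_pow]
  have key2 : (X : F[X]) ^ r = (X - C b) ^ r + C (b ^ r) := by rw [key]; ring
  -- exponent arithmetic
  have hrm : 2 < r := by omega
  have hm'1 : 1 < m' := by omega
  have hmr : m + m' = r := by omega
  -- factorizations
  set u : F[X] := X ^ m + C c' * ((X - C b) ^ m - X ^ m) with hu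
  set v : F[X] := X ^ m' + C c * ((X - C b) ^ m' - X ^ m') with hv
  have hh1 : h = X ^ m' * u := by
    rw [hh, hu, ← hmr]; ring
  have hh2 : h - C a = (X - C b) ^ m * v := by
    rw [hh, hv, key2, hCc', show (C a : F[X]) = C c * C (b ^ r) by rw [hca]; simp, ← hmr]
    ring
  have hh'1 : h' = X ^ m * v := by
    rw [hh', hv, ← hmr]; ring
  have hh'2 : h' - C a' = (X - C b) ^ m' * u := by
    rw [hh', hu, key2, hCc', show (C a' : F[X]) = (1 - C c) * C (b ^ r) by
      rw [hca', map_mul, hCc'], ← hmr]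
    ring
  -- monic and degrees of u, v
  have deglt : ∀ n : ℕ, 0 < n → (C c' * ((X - C b) ^ n - X ^ n)).degree < ((X : F[X]) ^ n).degree ∧
      (C c * ((X - C b) ^ n - X ^ n)).degree < ((X : F[X]) ^ n).degree := by
    intro n hn
    have deq : (((X : F[X]) - C b) ^ n).degree = ((X : F[X]) ^ n).degree := by
      rw [degree_X_pow, degree_pow, degree_X_sub_C]
      simp
    have hd : (((X : F[X]) - C b) ^ n - X ^ n).degree < ((X : F[X]) ^ n).degree := by
      have := degree_sub_lt deq (pow_ne_zero n (X_sub_C_ne_zero b))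
        (((monic_X_sub_C b).pow n).leadingCoeff.trans (leadingCoeff_X_pow n).symm)
      rwa [deq] at this
    exact ⟨by rwa [degree_C_mul hc'0], by rwa [degree_C_mul hc0]⟩
  have hum : u.Monic := (monic_X_pow m).add_of_left (deglt m (by omega)).1
  have hvm : v.Monic := (monic_X_pow m').add_of_left (deglt m' (by omega)).2
  have hud : u.natDegree = m := by
    have := degree_add_eq_left_of_degree_lt (deglt m (by omega)).1
    rw [degree_X_pow] at this
    exact natDegree_eq_of_degree_eq_some (hu ▸ this)
  have hvd : v.natDegree = m' := by
    have := degree_add_eq_left_of_degree_lt (deglt m' (by omega)).2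
    rw [degree_X_pow] at this
    exact natDegree_eq_of_degree_eq_some (hv ▸ this)
  -- compositions
  have hcomp : f = g.comp h := by
    rw [hg, mul_comp, pow_comp, pow_comp, sub_comp, X_comp, C_comp, hf, hh2, hh1,
      mul_pow, mul_pow, ← pow_mul, ← pow_mul]
    ring
  have hcomp' : f = g'.comp h' := by
    rw [hg', mul_comp, pow_comp, pow_comp, sub_comp, X_comp, C_comp, hf, hh'2, hh'1,
      mul_pow, mul_pow, ← pow_mul, ← pow_mul]
    ring
  -- f facts
  have hfmonic : f.Monic := by
    rw [hf]
    exact (((monic_X_pow _).mul ((monic_X_sub_C b).pow _)).mul (hum.pow m)).mul (hvm.pow m')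
  have hfdeg : f.natDegree = r ^ 2 := by
    rw [hf, Monic.natDegree_mul (((monic_X_pow _).mul ((monic_X_sub_C b).pow _)).mul (hum.pow m)) (hvm.pow m'),
      Monic.natDegree_mul ((monic_X_pow _).mul ((monic_X_sub_C b).pow _)) (hum.pow m),
      Monic.natDegree_mul (monic_X_pow _) ((monic_X_sub_C b).pow _),
      natDegree_X_pow, natDegree_pow, natDegree_pow, natDegree_pow,
      natDegree_X_sub_C, hud, hvd]
    nlinarith [hmr]
  have hfeval : f.eval 0 = 0 := by
    rw [hf]
    simp [zero_pow (Nat.mul_ne_zero (by omega : m ≠ 0) (by omega : m' ≠ 0))]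
  -- g facts
  have hgm : g.Monic := by rw [hg]; exact (monic_X_pow m).mul ((monic_X_sub_C a).pow m')
  have hgd : g.natDegree = r := by
    rw [hg, Monic.natDegree_mul (monic_X_pow m) ((monic_X_sub_C a).pow m'),
      natDegree_X_pow, natDegree_pow, natDegree_X_sub_C]
    omega
  have hge : g.eval 0 = 0 := by rw [hg]; simp [zero_pow (by omega : m ≠ 0)]
  have hgm' : g'.Monic := by rw [hg']; exact (monic_X_pow m').mul ((monic_X_sub_C a').pow m)
  have hgd' : g'.natDegree = r := by
    rw [hg', Monic.natDegree_mul (monic_X_pow m') ((monic_X_sub_C a').pow m),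
      natDegree_X_pow, natDegree_pow, natDegree_X_sub_C]
    omega
  have hge' : g'.eval 0 = 0 := by rw [hg']; simp [zero_pow (by omega : m' ≠ 0)]
  -- h facts
  have hhm : h.Monic := by rw [hh1]; exact (monic_X_pow m').mul hum
  have hhd : h.natDegree = r := by
    rw [hh1, Monic.natDegree_mul (monic_X_pow m') hum, natDegree_X_pow, hud]; omega
  have hhe : h.eval 0 = 0 := by rw [hh1]; simp [zero_pow (by omega : m' ≠ 0)]
  have hhm' : h'.Monic := by rw [hh'1]; exact (monic_X_pow m).mul hvm
  have hhd' : h'.natDegree = r := by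
    rw [hh'1, Monic.natDegree_mul (monic_X_pow m) hvm, natDegree_X_pow, hvd]; omega
  have hhe' : h'.eval 0 = 0 := by rw [hh'1]; simp [zero_pow (by omega : m ≠ 0)]
  -- inequality
  have hne : g ≠ g' := by
    by_cases haa : a = a'
    · -- then p ≠ 2, hence m ≠ m', compare root multiplicity at 0
      have hp2 : p ≠ 2 := by
        intro h2
        have h20 : (2 : F) = 0 := by
          have := CharP.cast_eq_zero F p
          rw [h2] at this; exact_mod_cast this
        have h2a : a + a' = b ^ r := by rw [ha']; ring
        rw [← haa] at h2a
        apply hbr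
        rw [← h2a]
        linear_combination a * h20
      have hmm : m ≠ m' := by
        intro hmm
        obtain ⟨k, hk, hrk⟩ := hr
        have hdvd : p ∣ 2 * m := by
          rw [show 2 * m = r by omega, hrk]
          exact dvd_pow_self p (by omega)
        rcases (Nat.Prime.dvd_mul hFact.out).mp hdvd with h2 | hmd
        · exact hp2 ((Nat.prime_dvd_prime_iff_eq hFact.out Nat.prime_two).mp h2)
        · exact hpm hmd
      intro hgg
      have e1 : g.rootMultiplicity 0 = m := by
        rw [hg, rootMultiplicity_mul
          (mul_ne_zero (pow_ne_zero _ X_ne_zero) (pow_ne_zero _ (X_sub_C_ne_zero a)))]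
        have h1 : ((X : F[X]) ^ m).rootMultiplicity 0 = m := by
          simpa using rootMultiplicity_X_sub_C_pow (0 : F) m
        have h2 : (((X : F[X]) - C a) ^ m').rootMultiplicity 0 = 0 := by
          refine rootMultiplicity_eq_zero ?_
          simp only [IsRoot, eval_pow, eval_sub, eval_X, eval_C, zero_sub]
          exact pow_ne_zero _ (neg_ne_zero.mpr ha)
        rw [h1, h2, add_zero]
      have e2 : g'.rootMultiplicity 0 = m' := by
        rw [hg', rootMultiplicity_mul
          (mul_ne_zero (pow_ne_zero _ X_ne_zero) (pow_ne_zero _ (X_sub_C_ne_zero a')))]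
        have h1 : ((X : F[X]) ^ m').rootMultiplicity 0 = m' := by
          simpa using rootMultiplicity_X_sub_C_pow (0 : F) m'
        have h2 : (((X : F[X]) - C a') ^ m).rootMultiplicity 0 = 0 := by
          refine rootMultiplicity_eq_zero ?_
          simp only [IsRoot, eval_pow, eval_sub, eval_X, eval_C, zero_sub]
          exact pow_ne_zero _ (neg_ne_zero.mpr ha'0)
        rw [h1, h2, add_zero]
      rw [hgg, e2] at e1
      exact hmm e1.symm
    · -- a ≠ a' : evaluate at a
      intro hgg
      have e1 : g.eval a = 0 := by rw [hg]; simp; exact Or.inr (by omega)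
      have e2 : g'.eval a ≠ 0 := by
        rw [hg']
        simp only [eval_mul, eval_pow, eval_sub, eval_X, eval_C]
        exact mul_ne_zero (pow_ne_zero _ ha) (pow_ne_zero _ (sub_ne_zero.mpr haa))
      rw [hgg] at e1; exact e2 e1
  refine ⟨hcomp, hcomp', hfmonic, hfdeg, hfeval, hgm, hgd, hge, hhm, hhd, hhe,
    hgm', hgd', hge', hhm', hhd', hhe', fun hpair => hne (congrArg Prod.fst hpair)⟩
end
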